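/- arXiv:1902.07235 — 7 statements merged into one kernel-verified Lean document; each statement's English description precedes it below -/
import Mathlib

section
/- For every ε ∈ (0,1) there exists δ > 0 such that for all a, b ∈ [0, δ), the derivative of the function b ↦ V(a,b) exists and equals the (N−1)-dimensional Lebesgue volume of the section S(a,b) = {(x₂,…,xₙ, y) ∈ ℝⁿ⁻¹ × ℝᵐ : (a·y₁ + b, x₂, …, xₙ, y) ∈ W}, i.e. of the orthogonal projection of W ∩ {x₁ = a·y₁ + b} to the coordinate hyperplane {x₁ = 0}. -/
/-!
The shear `x₁ ↦ x₁ - a y₁` and Fubini give `V(a, t) = ∫_{s < t} |S(a, s)| ds`, so by the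
fundamental theorem of calculus it suffices that `s ↦ |S(a, s)|` is continuous at `b`. The
sections are uniformly bounded, so by dominated convergence this holds as soon as the set where
the inequality defining `S(a, b)` is an equality is null; for each `y` that set is contained in
two round spheres of `ℝ²ᵏ`, which are null because `2k ≥ 1`.
-/

open MeasureTheory Set Filter Topology
open scoped ENNReal

namespace EuclideanSpace

variable {n : ℕ}

def cons (t : ℝ) (x : EuclideanSpace ℝ (Fin n)) : EuclideanSpace ℝ (Fin (n + 1)) :=
  WithLp.toLp 2 (Fin.cons t x.ofLp)

@[simp]
theorem cons_zero (t : ℝ) (x : EuclideanSpace ℝ (Fin n)) : cons t x 0 = t := rfl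

theorem norm_cons_sq (t : ℝ) (x : EuclideanSpace ℝ (Fin n)) :
    ‖cons t x‖ ^ 2 = t ^ 2 + ‖x‖ ^ 2 := by
  simp [EuclideanSpace.norm_sq_eq, cons, Fin.sum_univ_succ]

theorem norm_le_norm_cons (t : ℝ) (x : EuclideanSpace ℝ (Fin n)) : ‖x‖ ≤ ‖cons t x‖ :=
  (pow_le_pow_iff_left₀ (norm_nonneg _) (norm_nonneg _) two_ne_zero).1 <| by
    rw [norm_cons_sq]; nlinarith

@[fun_prop]
theorem continuous_cons : Continuous fun p : ℝ × EuclideanSpace ℝ (Fin n) => cons p.1 p.2 :=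
  (PiLp.continuous_toLp 2 _).comp <|
    Continuous.finCons (A := fun _ => ℝ) continuous_fst
      ((PiLp.continuous_ofLp 2 fun _ : Fin n => ℝ).comp continuous_snd)

theorem measurePreserving_cons :
    MeasurePreserving (fun p : ℝ × EuclideanSpace ℝ (Fin n) => cons p.1 p.2)
      (volume.prod volume) volume := by
  have h := ((PiLp.volume_preserving_toLp (Fin (n + 1))).comp
    (volume_preserving_piFinSuccAbove (fun _ : Fin (n + 1) => ℝ) 0).symm).comp
    ((MeasurePreserving.id volume).prod (PiLp.volume_preserving_ofLp (Fin n)))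
  have hcons : (fun p : ℝ × EuclideanSpace ℝ (Fin n) => cons p.1 p.2) =
      (WithLp.toLp 2 ∘ (MeasurableEquiv.piFinSuccAbove (fun _ => ℝ) 0).symm) ∘
        Prod.map id WithLp.ofLp := by
    funext p
    simp only [cons, Function.comp_apply, MeasurableEquiv.piFinSuccAbove_symm_apply,
      Fin.insertNthEquiv_zero, WithLp.toLp.injEq]
    rfl
  exact hcons ▸ h

end EuclideanSpace

section Slicing

variable {n : ℕ} {Y : Type*} [MeasurableSpace Y] {ν : Measure Y} [SFinite ν]

/-- For `ℓ y = a * y₁` this is the paper's `S(a, s)`. -/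
def shearedSection (W : Set (EuclideanSpace ℝ (Fin (n + 1)) × Y)) (ℓ : Y → ℝ) (s : ℝ) :
    Set (EuclideanSpace ℝ (Fin n) × Y) :=
  {q | (EuclideanSpace.cons (ℓ q.2 + s) q.1, q.2) ∈ W}

theorem measurePreserving_shear {ℓ : Y → ℝ} (hℓ : Measurable ℓ) :
    MeasurePreserving (fun p : ℝ × Y => (ℓ p.2 + p.1, p.2))
      ((volume : Measure ℝ).prod ν) ((volume : Measure ℝ).prod ν) :=
  (Measure.measurePreserving_swap.comp <|
    (MeasurePreserving.id ν).skew_product (g := fun y s => ℓ y + s)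
      ((hℓ.comp measurable_fst).add measurable_snd)
      (ae_of_all _ fun y => map_add_left_eq_self volume (ℓ y))).comp
    Measure.measurePreserving_swap

def shearCons (ℓ : Y → ℝ) (p : ℝ × (EuclideanSpace ℝ (Fin n) × Y)) :
    EuclideanSpace ℝ (Fin (n + 1)) × Y :=
  (EuclideanSpace.cons (ℓ p.2.2 + p.1) p.2.1, p.2.2)

theorem measurePreserving_shearCons {ℓ : Y → ℝ} (hℓ : Measurable ℓ) :
    MeasurePreserving (shearCons (n := n) ℓ) (volume.prod (volume.prod ν)) (volume.prod ν) :=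
  ((EuclideanSpace.measurePreserving_cons.prod (MeasurePreserving.id ν)).comp
    (measurePreserving_prodAssoc volume volume ν).symm).comp
    (measurePreserving_shear (hℓ.comp measurable_snd))

variable {W : Set (EuclideanSpace ℝ (Fin (n + 1)) × Y)} {ℓ : Y → ℝ}

theorem measurable_measure_shearedSection (hW : MeasurableSet W) (hℓ : Measurable ℓ) :
    Measurable fun s => (volume.prod ν) (shearedSection W ℓ s) :=
  measurable_measure_prodMk_left ((measurePreserving_shearCons (ν := ν) hℓ).measurable hW)

theorem measure_inter_lt_eq_lintegral_shearedSection (hW : MeasurableSet W) (hℓ : Measurable ℓ)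
    (t : ℝ) :
    (volume.prod ν) (W ∩ {p | p.1 0 < ℓ p.2 + t}) =
      ∫⁻ s in Iio t, (volume.prod ν) (shearedSection W ℓ s) := by
  have hΦ := measurePreserving_shearCons (n := n) (ν := ν) hℓ
  have hS := hΦ.measurable hW
  have hpre : shearCons ℓ ⁻¹' (W ∩ {p | p.1 0 < ℓ p.2 + t}) =
      shearCons ℓ ⁻¹' W ∩ Iio t ×ˢ univ := by
    ext p
    simp [shearCons]
  have hmeas : MeasurableSet (W ∩ {p | p.1 0 < ℓ p.2 + t}) :=
    hW.inter (measurableSet_lt (by fun_prop) (by fun_prop))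
  rw [← hΦ.measure_preimage hmeas.nullMeasurableSet, hpre,
    ← Measure.restrict_apply' (measurableSet_Iio.prod MeasurableSet.univ),
    ← Measure.restrict_prod_eq_prod_univ, Measure.prod_apply hS]
  rfl

end Slicing

theorem continuousAt_measure_setOf_le {Y : Type*} [MeasurableSpace Y] {μ : Measure Y}
    {H : ℝ → Y → ℝ} {c b : ℝ} {K : Set Y} (hH : ∀ s, Measurable (H s))
    (hHb : ∀ q, ContinuousAt (H · q) b) (hK : MeasurableSet K) (hKμ : μ K ≠ ∞)
    (hsub : ∀ s, {q | H s q ≤ c} ⊆ K) (hnull : μ {q | H b q = c} = 0) :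
    ContinuousAt (fun s => μ {q | H s q ≤ c}) b := by
  refine tendsto_measure_of_ae_tendsto_indicator (𝓝 b)
    (measurableSet_le (hH b) measurable_const) (fun s => measurableSet_le (hH s) measurable_const)
    hK hKμ (Eventually.of_forall hsub) ?_
  filter_upwards [measure_eq_zero_iff_ae_notMem.1 hnull] with q hq
  rcases lt_or_gt_of_ne hq with hlt | hgt
  · filter_upwards [(hHb q).eventually_lt_const hlt] with s hs
    simp [hs.le, hlt.le]
  · filter_upwards [(hHb q).eventually_const_lt hgt] with s hs
    simp [not_le.2 hs, not_le.2 hgt]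

theorem hasDerivAt_toReal_setLIntegral_Iio {f : ℝ → ℝ≥0∞} {b : ℝ} (hf : Measurable f)
    (hfin : ∀ t, ∫⁻ s in Iio t, f s ≠ ∞) (hfb : ContinuousAt f b) (hb : f b ≠ ∞) :
    HasDerivAt (fun t => (∫⁻ s in Iio t, f s).toReal) (f b).toReal b := by
  have hint : ∀ t, IntegrableOn (fun s => (f s).toReal) (Iic t) := fun t =>
    integrable_toReal_of_lintegral_ne_top hf.aemeasurable <|
      ne_top_of_le_ne_top (hfin (t + 1))
        (lintegral_mono_set (Iic_subset_Iio.2 (lt_add_one t)))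
  have heq : ∀ t, (∫⁻ s in Iio t, f s).toReal =
      (∫ s in Iic (b - 1), (f s).toReal) + ∫ s in (b - 1)..t, (f s).toReal := fun t => by
    rw [← intervalIntegral.integral_Iic_sub_Iic (hint _) (hint _), add_sub_cancel,
      integral_Iic_eq_integral_Iio, integral_toReal hf.aemeasurable (ae_lt_top hf (hfin t))]
  simp_rw [heq]
  refine (intervalIntegral.integral_hasDerivAt_right ?_ ?_ ?_).const_add _
  · exact (intervalIntegrable_iff_integrableOn_Ioc_of_le (by linarith)).2
      ((hint b).mono_set Ioc_subset_Iic_self)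
  · exact hf.ennreal_toReal.stronglyMeasurable.stronglyMeasurableAtFilter
  · exact (ENNReal.continuousAt_toReal hb).comp hfb

section SublevelBody

variable {n : ℕ} {Y : Type*} [NormedAddCommGroup Y]

theorem shearedSection_subset_closedBall {W : Set (EuclideanSpace ℝ (Fin (n + 1)) × Y)} {R : ℝ}
    (hW : W ⊆ Metric.closedBall 0 R) (ℓ : Y → ℝ) (s : ℝ) :
    shearedSection W ℓ s ⊆ Metric.closedBall 0 R := fun q hq => by
  have h := mem_closedBall_zero_iff.1 (hW hq)
  rw [Prod.norm_def] at h
  rw [mem_closedBall_zero_iff, Prod.norm_def]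
  exact max_le ((EuclideanSpace.norm_le_norm_cons _ _).trans (le_max_left _ _ |>.trans h))
    ((le_max_right _ _).trans h)

variable [MeasurableSpace Y] [BorelSpace Y] [ProperSpace Y] {ν : Measure Y} [SFinite ν]
  [IsFiniteMeasureOnCompacts ν]

theorem hasDerivAt_measure_sublevel_inter_lt {Φ : EuclideanSpace ℝ (Fin (n + 1)) × Y → ℝ}
    {c b : ℝ} {ℓ : Y → ℝ} (hΦ : Continuous Φ) (hℓ : Continuous ℓ)
    (hbdd : Bornology.IsBounded {p | Φ p ≤ c})
    (hnull : (volume.prod ν) {q | Φ (EuclideanSpace.cons (ℓ q.2 + b) q.1, q.2) = c} = 0) :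
    HasDerivAt (fun t => ((volume.prod ν) ({p | Φ p ≤ c} ∩ {p | p.1 0 < ℓ p.2 + t})).toReal)
      ((volume.prod ν) (shearedSection {p | Φ p ≤ c} ℓ b)).toReal b := by
  have hW : MeasurableSet {p | Φ p ≤ c} := measurableSet_le hΦ.measurable measurable_const
  obtain ⟨R, hR⟩ := hbdd.subset_closedBall 0
  have hK : (volume.prod ν) (Metric.closedBall (0 : EuclideanSpace ℝ (Fin n) × Y) R) ≠ ∞ :=
    measure_closedBall_lt_top.ne
  have hsec := shearedSection_subset_closedBall hR ℓ
  simp_rw [measure_inter_lt_eq_lintegral_shearedSection hW hℓ.measurable]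
  refine hasDerivAt_toReal_setLIntegral_Iio (measurable_measure_shearedSection hW hℓ.measurable)
    (fun t => ?_) ?_ (ne_top_of_le_ne_top hK (measure_mono (hsec b)))
  · rw [← measure_inter_lt_eq_lintegral_shearedSection hW hℓ.measurable]
    exact ne_top_of_le_ne_top measure_closedBall_lt_top.ne
      (measure_mono (inter_subset_left.trans hR))
  · exact continuousAt_measure_setOf_le
      (H := fun s (q : EuclideanSpace ℝ (Fin n) × Y) =>
        Φ (EuclideanSpace.cons (ℓ q.2 + s) q.1, q.2))
      (fun s => by fun_prop) (fun q => by fun_prop) Metric.isClosed_closedBall.measurableSet hK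
      hsec hnull

end SublevelBody

section NormLevelSets

variable {E : Type*} [NormedAddCommGroup E] [NormedSpace ℝ E] [MeasurableSpace E]
  [BorelSpace E] [FiniteDimensional ℝ E] [Nontrivial E] (μ : Measure E) [μ.IsAddHaarMeasure]

theorem addHaar_setOf_sq_add_norm_sq_eq (α β : ℝ) : μ {x | (α + ‖x‖ ^ 2) ^ 2 = β} = 0 := by
  refine measure_mono_null (fun x hx => ?_) <| measure_union_null
    (Measure.addHaar_sphere μ (0 : E) √(√β - α)) (Measure.addHaar_sphere μ (0 : E) √(-√β - α))
  have hnorm : ‖x‖ = √(‖x‖ ^ 2) := (Real.sqrt_sq (norm_nonneg x)).symm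
  rcases abs_choice (α + ‖x‖ ^ 2) with h | h <;>
    rw [← Real.sqrt_sq_eq_abs, hx.out] at h
  · exact Or.inl <| by rw [mem_sphere_zero_iff_norm, hnorm, h, add_sub_cancel_left]
  · exact Or.inr <| by rw [mem_sphere_zero_iff_norm, hnorm, h]; congr 1; linarith

theorem measure_prod_setOf_sq_add_norm_sq_eq {Y : Type*} [MeasurableSpace Y] (ν : Measure Y)
    [SFinite ν] {α β : Y → ℝ} (hα : Measurable α) (hβ : Measurable β) :
    (μ.prod ν) {q | (α q.2 + ‖q.1‖ ^ 2) ^ 2 = β q.2} = 0 := by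
  rw [Measure.prod_apply_symm (measurableSet_eq_fun (by fun_prop) (by fun_prop))]
  simp [addHaar_setOf_sq_add_norm_sq_eq]

end NormLevelSets

theorem isBounded_setOf_sq_norm_sq_sub_one_add_norm_sq_le {E F : Type*} [NormedAddCommGroup E]
    [NormedAddCommGroup F] (c : ℝ) :
    Bornology.IsBounded {p : E × F | (‖p.1‖ ^ 2 - 1) ^ 2 + ‖p.2‖ ^ 2 ≤ c} := by
  refine (Metric.isBounded_iff_subset_closedBall 0).2 ⟨3 + c, fun p (hp : _ ≤ c) => ?_⟩
  rw [mem_closedBall_zero_iff, Prod.norm_def]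
  exact max_le
    (by nlinarith [norm_nonneg p.1, sq_nonneg (‖p.1‖ ^ 2 - 2), sq_nonneg (‖p.1‖ - 1)])
    (by nlinarith [norm_nonneg p.2, sq_nonneg (‖p.1‖ ^ 2 - 1), sq_nonneg (‖p.2‖ - 1)])

theorem volume_deriv_eq_section_volume_general (k m : ℕ) (hk : 1 ≤ k) (hm : 1 ≤ m)
    (ε : ℝ) :
    ∃ δ > (0 : ℝ), ∀ a b : ℝ, a ∈ Set.Ico (0 : ℝ) δ → b ∈ Set.Ico (0 : ℝ) δ →
      HasDerivAt (fun b' : ℝ =>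
          (volume {p : EuclideanSpace ℝ (Fin (2 * k + 1)) × EuclideanSpace ℝ (Fin m) |
            ((‖p.1‖ ^ 2 - 1) ^ 2 + ‖p.2‖ ^ 2 ≤ ε ^ 2) ∧
              p.1 0 < a * p.2 ⟨0, hm⟩ + b'}).toReal)
        ((volume {q : EuclideanSpace ℝ (Fin (2 * k)) × EuclideanSpace ℝ (Fin m) |
            ((a * q.2 ⟨0, hm⟩ + b) ^ 2 + ‖q.1‖ ^ 2 - 1) ^ 2 + ‖q.2‖ ^ 2 ≤ ε ^ 2}).toReal)
        b := by
  refine ⟨1, one_pos, fun a b _ _ => ?_⟩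
  have : Nonempty (Fin (2 * k)) := ⟨⟨0, by omega⟩⟩
  have hsec : ∀ s, shearedSection {p | (‖p.1‖ ^ 2 - 1) ^ 2 + ‖p.2‖ ^ 2 ≤ ε ^ 2}
      (fun y : EuclideanSpace ℝ (Fin m) => a * y ⟨0, hm⟩) s =
      {q : EuclideanSpace ℝ (Fin (2 * k)) × EuclideanSpace ℝ (Fin m) |
        ((a * q.2 ⟨0, hm⟩ + s) ^ 2 + ‖q.1‖ ^ 2 - 1) ^ 2 + ‖q.2‖ ^ 2 ≤ ε ^ 2} := fun s => by
    ext q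
    simp [shearedSection, EuclideanSpace.norm_cons_sq, add_sub_assoc]
  rw [← hsec]
  refine hasDerivAt_measure_sublevel_inter_lt
    (Φ := fun p : EuclideanSpace ℝ (Fin (2 * k + 1)) × EuclideanSpace ℝ (Fin m) =>
      (‖p.1‖ ^ 2 - 1) ^ 2 + ‖p.2‖ ^ 2)
    (ℓ := fun y => a * y ⟨0, hm⟩) (by fun_prop) (by fun_prop)
    (isBounded_setOf_sq_norm_sq_sub_one_add_norm_sq_le _) ?_
  convert measure_prod_setOf_sq_add_norm_sq_eq
    (volume : Measure (EuclideanSpace ℝ (Fin (2 * k)))) volume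
    (α := fun y : EuclideanSpace ℝ (Fin m) => (a * y ⟨0, hm⟩ + b) ^ 2 - 1)
    (β := fun y => ε ^ 2 - ‖y‖ ^ 2) (by fun_prop) (by fun_prop) using 2
  ext q
  simp only [mem_ofPred_eq, EuclideanSpace.norm_cons_sq]
  constructor <;> intro h <;> linarith

/-- With `W = {(x,y) : (|x|² − 1)² + |y|² ≤ ε²} ⊆ ℝⁿ × ℝᵐ` (`n = 2k+1`)
and `V(a,b)` the volume of `W ∩ {x₁ < a·y₁ + b}`: for every `ε ∈ (0,1)` there is `δ > 0`
such that for `a, b ∈ [0, δ)` the derivative `∂V(a,b)/∂b` exists and equals the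
`(N−1)`-dimensional volume of the section
`S(a,b) = {(x₂,…,xₙ,y) : (a·y₁+b, x₂,…,xₙ, y) ∈ W}`, i.e. of the orthogonal projection of
`W ∩ {x₁ = a·y₁ + b}` to the hyperplane `{x₁ = 0}`. -/
theorem volume_deriv_eq_section_volume (k m : ℕ) (hk : 1 ≤ k) (hm : 1 ≤ m)
    (ε : ℝ) (hε : ε ∈ Set.Ioo (0 : ℝ) 1) :
    ∃ δ > (0 : ℝ), ∀ a b : ℝ, a ∈ Set.Ico (0 : ℝ) δ → b ∈ Set.Ico (0 : ℝ) δ →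
      HasDerivAt (fun b' : ℝ =>
          (volume {p : EuclideanSpace ℝ (Fin (2 * k + 1)) × EuclideanSpace ℝ (Fin m) |
            ((‖p.1‖ ^ 2 - 1) ^ 2 + ‖p.2‖ ^ 2 ≤ ε ^ 2) ∧
              p.1 0 < a * p.2 ⟨0, hm⟩ + b'}).toReal)
        ((volume {q : EuclideanSpace ℝ (Fin (2 * k)) × EuclideanSpace ℝ (Fin m) |
            ((a * q.2 ⟨0, hm⟩ + b) ^ 2 + ‖q.1‖ ^ 2 - 1) ^ 2 + ‖q.2‖ ^ 2 ≤ ε ^ 2}).toReal)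
        b :=
  volume_deriv_eq_section_volume_general k m hk hm ε
end

section
/- Suppose m ≥ 2. For every ε ∈ (0,1) there exists δ > 0 such that for all a, b ∈ [0, δ), the (N−1)-dimensional Lebesgue volume of the section {(x₂,…,xₙ, y) ∈ ℝⁿ⁻¹ × ℝᵐ : (a·y₁ + b, x₂, …, xₙ, y) ∈ W} equals the iterated integral ∫_{−ε}^{ε} ∫₀^{√(ε²−y₁²)} (m−1)·v_{m−1}·ρ^{m−2}·v₂ₖ·[ (1 − (a·y₁ + b)² + √(ε² − y₁² − ρ²))ᵏ − (1 − (a·y₁ + b)² − √(ε² − y₁² − ρ²))ᵏ ] dρ dy₁. -/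
open MeasureTheory

/-- The Lebesgue volume of the unit ball in `ℝᵖ`. -/
noncomputable def unitBallVol (p : ℕ) : ℝ :=
  (volume (Metric.closedBall (0 : EuclideanSpace ℝ (Fin p)) 1)).toReal

/-!
Over a point `y ∈ ℝᵐ`, the `x`-section of the body is the spherical shell
`1 - c - s ≤ ‖x‖² ≤ 1 - c + s` in `ℝ²ᵏ`, where `c = (a y₁ + b)²` and `s = √(ε² - ‖y‖²)`. Taking
`δ = (1 - ε) / 2` keeps `c + s ≤ 1`, so the shell has volume `v₂ₖ ((1 - c + s)ᵏ - (1 - c - s)ᵏ)`.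
Fubini turns the volume into the integral of this over `y`; splitting `y = (y₁, y')` and using
polar coordinates in `y' ∈ ℝᵐ⁻¹` gives the iterated integral, whose integrand vanishes outside
`‖y‖ ≤ ε`.
-/

open Metric

lemma unitBallVol_nonneg (p : ℕ) : 0 ≤ unitBallVol p := ENNReal.toReal_nonneg

lemma volume_closedBall_zero_euclideanSpace (n : ℕ) {r : ℝ} (hr : 0 ≤ r) :
    volume (closedBall (0 : EuclideanSpace ℝ (Fin n)) r) =
      ENNReal.ofReal (unitBallVol n * r ^ n) := by
  rw [Measure.addHaar_closedBall' _ _ hr, finrank_euclideanSpace_fin, mul_comm,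
    ENNReal.ofReal_mul (unitBallVol_nonneg n), unitBallVol,
    ENNReal.ofReal_toReal (isCompact_closedBall _ _).measure_ne_top]

lemma volume_setOf_norm_mem_Icc_euclideanSpace {n : ℕ} (hn : n ≠ 0) {r R : ℝ} (hr : 0 ≤ r)
    (hrR : r ≤ R) :
    volume {x : EuclideanSpace ℝ (Fin n) | ‖x‖ ∈ Set.Icc r R} =
      ENNReal.ofReal (unitBallVol n * (R ^ n - r ^ n)) := by
  have : Nontrivial (EuclideanSpace ℝ (Fin n)) :=
    Module.nontrivial_of_finrank_pos (R := ℝ) (by rw [finrank_euclideanSpace_fin]; omega)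
  have hshell : {x : EuclideanSpace ℝ (Fin n) | ‖x‖ ∈ Set.Icc r R} =
      closedBall 0 R \ ball 0 r := by
    ext x; simp [and_comm]
  rw [hshell, measure_sdiff (ball_subset_closedBall.trans (closedBall_subset_closedBall hrR))
      measurableSet_ball.nullMeasurableSet measure_ball_lt_top.ne,
    ← Measure.addHaar_closedBall_eq_addHaar_ball,
    volume_closedBall_zero_euclideanSpace n (hr.trans hrR),
    volume_closedBall_zero_euclideanSpace n hr,
    ← ENNReal.ofReal_sub _ (mul_nonneg (unitBallVol_nonneg n) (pow_nonneg hr n)), mul_sub]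

noncomputable def shellVolume (k : ℕ) (t d : ℝ) : ℝ :=
  unitBallVol (2 * k) * ((t + √d) ^ k - (t - √d) ^ k)

lemma shellVolume_of_neg (k : ℕ) (t : ℝ) {d : ℝ} (hd : d < 0) : shellVolume k t d = 0 := by
  simp [shellVolume, Real.sqrt_eq_zero'.mpr hd.le]

lemma shellVolume_nonneg (k : ℕ) {t d : ℝ} (h : 0 ≤ d → √d ≤ t) : 0 ≤ shellVolume k t d := by
  rcases lt_or_ge d 0 with hd | hd
  · rw [shellVolume_of_neg k t hd]
  · have hinner : 0 ≤ t - √d := sub_nonneg.mpr (h hd)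
    exact mul_nonneg (unitBallVol_nonneg _) (sub_nonneg.mpr
      (pow_le_pow_left₀ hinner (by linarith [Real.sqrt_nonneg d]) k))

lemma continuous_shellVolume (k : ℕ) : Continuous fun p : ℝ × ℝ => shellVolume k p.1 p.2 := by
  unfold shellVolume; fun_prop

lemma volume_setOf_sq_norm_sq_sub_le {k : ℕ} (hk : k ≠ 0) {t d : ℝ} (h : 0 ≤ d → √d ≤ t) :
    volume {x : EuclideanSpace ℝ (Fin (2 * k)) | (‖x‖ ^ 2 - t) ^ 2 ≤ d} =
      ENNReal.ofReal (shellVolume k t d) := by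
  rcases lt_or_ge d 0 with hd | hd
  · have hempty : {x : EuclideanSpace ℝ (Fin (2 * k)) | (‖x‖ ^ 2 - t) ^ 2 ≤ d} = ∅ :=
      Set.eq_empty_of_forall_notMem fun x (hx : (‖x‖ ^ 2 - t) ^ 2 ≤ d) => by
        nlinarith [sq_nonneg (‖x‖ ^ 2 - t)]
    rw [hempty, measure_empty, shellVolume_of_neg k t hd, ENNReal.ofReal_zero]
  have hinner : 0 ≤ t - √d := sub_nonneg.mpr (h hd)
  have houter : 0 ≤ t + √d := by linarith [Real.sqrt_nonneg d]
  have hshell : {x : EuclideanSpace ℝ (Fin (2 * k)) | (‖x‖ ^ 2 - t) ^ 2 ≤ d} =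
      {x | ‖x‖ ∈ Set.Icc √(t - √d) √(t + √d)} := by
    ext x
    simp only [Set.mem_ofPred_eq, Set.mem_Icc, Real.sq_le hd, Real.sqrt_le_left (norm_nonneg x),
      Real.le_sqrt (norm_nonneg x) houter]
    constructor <;> rintro ⟨h₁, h₂⟩ <;> constructor <;> linarith
  have hpow : ∀ {s : ℝ}, 0 ≤ s → √s ^ (2 * k) = s ^ k := fun hs => by
    rw [pow_mul, Real.sq_sqrt hs]
  rw [hshell, volume_setOf_norm_mem_Icc_euclideanSpace (by omega) (Real.sqrt_nonneg _)
    (Real.sqrt_le_sqrt (by linarith [Real.sqrt_nonneg d])), hpow houter, hpow hinner, shellVolume]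

theorem volume_toReal_setOf_sq_norm_sq_sub_le_eq_integral {k : ℕ} (hk : k ≠ 0)
    {ι : Type*} [Fintype ι] {t d : EuclideanSpace ℝ ι → ℝ} (ht : Measurable t) (hd : Measurable d)
    (h : ∀ y, 0 ≤ d y → √(d y) ≤ t y) :
    (volume {q : EuclideanSpace ℝ (Fin (2 * k)) × EuclideanSpace ℝ ι |
        (‖q.1‖ ^ 2 - t q.2) ^ 2 ≤ d q.2}).toReal =
      ∫ y, shellVolume k (t y) (d y) := by
  have hmeas : MeasurableSet {q : EuclideanSpace ℝ (Fin (2 * k)) × EuclideanSpace ℝ ι |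
      (‖q.1‖ ^ 2 - t q.2) ^ 2 ≤ d q.2} :=
    measurableSet_le (by fun_prop) (by fun_prop)
  have hvol : Measurable fun y => shellVolume k (t y) (d y) :=
    (continuous_shellVolume k).measurable.comp (ht.prodMk hd)
  rw [integral_eq_lintegral_of_nonneg_ae (Filter.Eventually.of_forall fun y =>
      shellVolume_nonneg k (h y)) hvol.aestronglyMeasurable,
    Measure.volume_eq_prod, Measure.prod_apply_symm hmeas]
  congr 1
  exact lintegral_congr fun y => volume_setOf_sq_norm_sq_sub_le hk (h y)

lemma integral_fun_norm_euclideanSpace (n : ℕ) (f : ℝ → ℝ) :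
    ∫ z : EuclideanSpace ℝ (Fin (n + 1)), f ‖z‖ =
      (n + 1) * unitBallVol (n + 1) * ∫ r in Set.Ioi (0 : ℝ), r ^ n * f r := by
  rw [integral_fun_norm_addHaar volume f, finrank_euclideanSpace_fin, measureReal_def,
    ← Measure.addHaar_closedBall_eq_addHaar_ball]
  simp [unitBallVol, mul_assoc]

noncomputable def EuclideanSpace.splitFirstCoord (n : ℕ) :
    EuclideanSpace ℝ (Fin (n + 1)) ≃ᵐ ℝ × EuclideanSpace ℝ (Fin n) :=
  (MeasurableEquiv.toLp 2 (Fin (n + 1) → ℝ)).symm.trans <|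
    (MeasurableEquiv.piFinSuccAbove (fun _ => ℝ) 0).trans <|
      (MeasurableEquiv.refl ℝ).prodCongr (MeasurableEquiv.toLp 2 (Fin n → ℝ))

lemma EuclideanSpace.measurePreserving_splitFirstCoord (n : ℕ) :
    MeasurePreserving (EuclideanSpace.splitFirstCoord n) :=
  (PiLp.volume_preserving_ofLp _).trans <| (volume_preserving_piFinSuccAbove _ 0).trans <|
    (MeasurePreserving.id volume).prod (PiLp.volume_preserving_toLp _)

lemma EuclideanSpace.norm_sq_eq_splitFirstCoord (n : ℕ) (y : EuclideanSpace ℝ (Fin (n + 1))) :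
    ‖y‖ ^ 2 = (EuclideanSpace.splitFirstCoord n y).1 ^ 2 +
      ‖(EuclideanSpace.splitFirstCoord n y).2‖ ^ 2 := by
  simp only [EuclideanSpace.real_norm_sq_eq, Fin.sum_univ_succ]
  rfl

lemma integral_comp_apply_zero_norm_sq (n : ℕ) {g : ℝ → ℝ → ℝ}
    (hg : Integrable fun y : EuclideanSpace ℝ (Fin (n + 1)) => g (y 0) (‖y‖ ^ 2)) :
    ∫ y : EuclideanSpace ℝ (Fin (n + 1)), g (y 0) (‖y‖ ^ 2) =
      ∫ c, ∫ z : EuclideanSpace ℝ (Fin n), g c (c ^ 2 + ‖z‖ ^ 2) := by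
  have he := EuclideanSpace.measurePreserving_splitFirstCoord n
  have hcomp : (fun y => g (y 0) (‖y‖ ^ 2)) =
      (fun z : ℝ × _ => g z.1 (z.1 ^ 2 + ‖z.2‖ ^ 2)) ∘ EuclideanSpace.splitFirstCoord n := by
    ext y
    rw [Function.comp_apply, EuclideanSpace.norm_sq_eq_splitFirstCoord n y]
    rfl
  rw [hcomp, he.integrable_comp_emb (MeasurableEquiv.measurableEmbedding _)] at hg
  rw [hcomp]
  exact (he.integral_comp' _).trans (integral_prod _ hg)

theorem integral_comp_apply_zero_norm_sq_eq_iterated (n : ℕ) {ε : ℝ} (hε : 0 ≤ ε)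
    {g : ℝ → ℝ → ℝ} (hg : Continuous (Function.uncurry g))
    (hg0 : ∀ c u, ε ^ 2 < u → g c u = 0) :
    ∫ y : EuclideanSpace ℝ (Fin (n + 2)), g (y 0) (‖y‖ ^ 2) =
      ∫ c in -ε..ε, ∫ r in (0 : ℝ)..√(ε ^ 2 - c ^ 2),
        (n + 1) * unitBallVol (n + 1) * r ^ n * g c (c ^ 2 + r ^ 2) := by
  have hint : Integrable fun y : EuclideanSpace ℝ (Fin (n + 2)) => g (y 0) (‖y‖ ^ 2) := by
    refine Continuous.integrable_of_hasCompactSupport (by fun_prop) ?_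
    refine HasCompactSupport.intro (isCompact_closedBall 0 ε) fun y hy => hg0 _ _ ?_
    rw [mem_closedBall_zero_iff, not_le] at hy
    nlinarith
  have houter : ∀ c ∉ Set.Icc (-ε) ε,
      ∫ z : EuclideanSpace ℝ (Fin (n + 1)), g c (c ^ 2 + ‖z‖ ^ 2) = 0 := by
    intro c hc
    have hc : ε ^ 2 < c ^ 2 := by
      rw [Set.mem_Icc, not_and_or, not_le, not_le] at hc
      rcases hc with hc | hc <;> nlinarith
    exact integral_eq_zero_of_ae (Filter.Eventually.of_forall fun z =>
      hg0 _ _ (by nlinarith [sq_nonneg ‖z‖]))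
  rw [integral_comp_apply_zero_norm_sq _ hint, intervalIntegral.integral_of_le (by linarith),
    ← integral_Icc_eq_integral_Ioc, ← setIntegral_eq_integral_of_forall_compl_eq_zero houter]
  refine setIntegral_congr_fun measurableSet_Icc fun c _ => ?_
  have hinner : ∀ r ∈ Set.Ioi 0 \ Set.Ioc 0 √(ε ^ 2 - c ^ 2),
      r ^ n * g c (c ^ 2 + r ^ 2) = 0 := by
    rintro r ⟨hr0, hr⟩
    rw [Set.mem_Ioi] at hr0
    have hr : √(ε ^ 2 - c ^ 2) < r := by simpa [hr0] using hr
    rw [hg0 _ _ (by linarith [(Real.sqrt_lt' hr0).mp hr]), mul_zero]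
  rw [integral_fun_norm_euclideanSpace n fun r => g c (c ^ 2 + r ^ 2),
    setIntegral_eq_of_subset_of_forall_sdiff_eq_zero measurableSet_Ioi Set.Ioc_subset_Ioi_self
      hinner, ← intervalIntegral.integral_of_le (Real.sqrt_nonneg _),
    ← intervalIntegral.integral_const_mul]
  simp only [mul_assoc]

lemma sqrt_sub_le_one_sub_sq {a b c u ε : ℝ} (ha : 0 ≤ a) (hb : 0 ≤ b) (hε : 0 ≤ ε)
    (hab : a + b ≤ 1 - ε) (hc : c ^ 2 ≤ u) (hu : u ≤ ε ^ 2) :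
    √(ε ^ 2 - u) ≤ 1 - (a * c + b) ^ 2 := by
  have hsqrt : √(ε ^ 2 - u) ≤ ε := (Real.sqrt_le_left hε).mpr (by nlinarith)
  obtain ⟨hc₁, hc₂⟩ := abs_le_of_sq_le_sq' (hc.trans hu) hε
  have hlin : |a * c + b| ≤ 1 - ε := abs_le.mpr ⟨by nlinarith, by nlinarith⟩
  have hsq : (a * c + b) ^ 2 ≤ |a * c + b| := by
    rw [← sq_abs]; nlinarith [abs_nonneg (a * c + b)]
  linarith

/-- Case `m ≥ 2`.  With `W = {(x,y) : (|x|² − 1)² + |y|² ≤ ε²}` in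
`ℝ^{2k+1} × ℝᵐ`: for every `ε ∈ (0,1)` there is `δ > 0` such that for `a, b ∈ [0, δ)` the
`(N−1)`-dimensional volume of the section `{(x₂,…,xₙ,y) : (a·y₁+b, x₂,…,xₙ, y) ∈ W}` equals
the iterated integral
`∫_{−ε}^{ε} ∫₀^{√(ε²−y₁²)} (m−1)·v_{m−1}·ρ^{m−2}·v₂ₖ·[(1−(a·y₁+b)²+√(ε²−y₁²−ρ²))ᵏ −
 (1−(a·y₁+b)²−√(ε²−y₁²−ρ²))ᵏ] dρ dy₁`. -/
theorem section_volume_eq_iterated_integral (k m : ℕ) (hk : 1 ≤ k) (hm : 2 ≤ m)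
    (ε : ℝ) (hε : ε ∈ Set.Ioo (0 : ℝ) 1) :
    ∃ δ > (0 : ℝ), ∀ a b : ℝ, a ∈ Set.Ico (0 : ℝ) δ → b ∈ Set.Ico (0 : ℝ) δ →
      (volume {q : EuclideanSpace ℝ (Fin (2 * k)) × EuclideanSpace ℝ (Fin m) |
          ((a * q.2 ⟨0, by omega⟩ + b) ^ 2 + ‖q.1‖ ^ 2 - 1) ^ 2 + ‖q.2‖ ^ 2 ≤ ε ^ 2}).toReal =
        ∫ y₁ in (-ε)..ε, ∫ ρ in (0 : ℝ)..(Real.sqrt (ε ^ 2 - y₁ ^ 2)),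
          ((m : ℝ) - 1) * unitBallVol (m - 1) * ρ ^ (m - 2) * unitBallVol (2 * k) *
            ((1 - (a * y₁ + b) ^ 2 + Real.sqrt (ε ^ 2 - y₁ ^ 2 - ρ ^ 2)) ^ k -
             (1 - (a * y₁ + b) ^ 2 - Real.sqrt (ε ^ 2 - y₁ ^ 2 - ρ ^ 2)) ^ k) := by
  obtain ⟨hε0, hε1⟩ := hε
  obtain ⟨n, rfl⟩ : ∃ n, m = n + 2 := ⟨m - 2, by omega⟩
  refine ⟨(1 - ε) / 2, by linarith, fun a b ⟨ha0, ha⟩ ⟨hb0, hb⟩ => ?_⟩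
  have hcoord (y : EuclideanSpace ℝ (Fin (n + 2))) : y 0 ^ 2 ≤ ‖y‖ ^ 2 := by
    simpa using pow_le_pow_left₀ (norm_nonneg _) (PiLp.norm_apply_le y 0) 2
  have hset : {q : EuclideanSpace ℝ (Fin (2 * k)) × EuclideanSpace ℝ (Fin (n + 2)) |
      ((a * q.2 0 + b) ^ 2 + ‖q.1‖ ^ 2 - 1) ^ 2 + ‖q.2‖ ^ 2 ≤ ε ^ 2} =
      {q | (‖q.1‖ ^ 2 - (1 - (a * q.2 0 + b) ^ 2)) ^ 2 ≤ ε ^ 2 - ‖q.2‖ ^ 2} := by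
    ext q
    simp only [Set.mem_ofPred_eq]
    constructor <;> intro h <;> linarith
  simp only [Fin.zero_eta]
  rw [hset, volume_toReal_setOf_sq_norm_sq_sub_le_eq_integral (by omega) (by fun_prop)
      (by fun_prop) fun y hy =>
        sqrt_sub_le_one_sub_sq ha0 hb0 hε0.le (by linarith) (hcoord y) (by linarith),
    integral_comp_apply_zero_norm_sq_eq_iterated n hε0.le
      (g := fun c u => shellVolume k (1 - (a * c + b) ^ 2) (ε ^ 2 - u))
      ((continuous_shellVolume k).comp
        (by fun_prop : Continuous fun p : ℝ × ℝ => (1 - (a * p.1 + b) ^ 2, ε ^ 2 - p.2)))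
      fun c u hu => shellVolume_of_neg _ _ (by linarith)]
  refine intervalIntegral.integral_congr fun c _ => intervalIntegral.integral_congr fun r _ => ?_
  simp only [shellVolume, sub_add_eq_sub_sub]
  push_cast
  ring
end

section
/- Suppose m = 1 (so N = 2k+2). For every ε ∈ (0,1) there exists δ > 0 such that for all a, b ∈ [0, δ), the (N−1)-dimensional Lebesgue volume of the section {(x₂,…,xₙ, y) ∈ ℝⁿ⁻¹ × ℝ : (a·y + b, x₂, …, xₙ, y) ∈ W} equals v₂ₖ · ∫_{−ε}^{ε} [ (1 − (a·y + b)² + √(ε² − y²))ᵏ − (1 − (a·y + b)² − √(ε² − y²))ᵏ ] dy. -/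
open MeasureTheory

/-!
Slicing `{(x, y) : ((a y + b)² + |x|² − 1)² + y² ≤ ε²}` at height `y` gives the spherical shell
`t − s ≤ |x|² ≤ t + s` with `t = 1 − (a y + b)²` and `s = √(ε² − y²)`, whose volume is
`((t + s)ᵏ − (t − s)ᵏ) v₂ₖ`; Fubini integrates these over `y ∈ [−ε, ε]`.  Taking `δ = (1 − ε)/2`
gives `(a y + b)² ≤ 1 − ε` there, and `s ≤ ε`, so `t − s ≥ 0`: every slice is a genuine shell.
-/

theorem MeasureTheory.Measure.toReal_prod_apply_eq_integral {α β : Type*} [MeasurableSpace α]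
    [MeasurableSpace β] {μ : Measure α} {ν : Measure β} [SFinite μ] [SFinite ν]
    {S : Set (α × β)} (hS : MeasurableSet S) {f : β → ℝ} (hf : Integrable f ν) (hf₀ : 0 ≤ f)
    (hslice : ∀ y, μ ((fun x => (x, y)) ⁻¹' S) = ENNReal.ofReal (f y)) :
    (μ.prod ν S).toReal = ∫ y, f y ∂ν := by
  rw [Measure.prod_apply_symm hS]
  simp_rw [hslice]
  rw [← ofReal_integral_eq_lintegral_ofReal hf (ae_of_all _ hf₀),
    ENNReal.toReal_ofReal (integral_nonneg hf₀)]

theorem setOf_sq_norm_sq_sub_le_sq {E : Type*} [SeminormedAddCommGroup E] {s t : ℝ} (hs : 0 ≤ s)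
    (hst : s ≤ t) :
    {x : E | (‖x‖ ^ 2 - t) ^ 2 ≤ s ^ 2} =
      Metric.closedBall 0 √(t + s) \ Metric.ball 0 √(t - s) := by
  ext x
  simp only [Set.mem_ofPred_eq, Set.mem_sdiff, mem_closedBall_zero_iff, mem_ball_zero_iff, not_lt,
    Real.le_sqrt (norm_nonneg x) (by linarith : 0 ≤ t + s), Real.sqrt_le_left (norm_nonneg x),
    sq_le_sq, abs_of_nonneg hs, abs_le]
  constructor <;> rintro ⟨h₁, h₂⟩ <;> constructor <;> linarith

theorem measure_setOf_sq_add_sq_le_of_lt {E : Type*} [Norm E] [MeasurableSpace E] (μ : Measure E)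
    (c : ℝ) {y ε : ℝ} (hy : ε ^ 2 < y ^ 2) :
    μ {x : E | (c + ‖x‖ ^ 2 - 1) ^ 2 + y ^ 2 ≤ ε ^ 2} = 0 := by
  rw [measure_eq_zero_iff_ae_notMem]
  refine ae_of_all _ fun x hx => ?_
  rw [Set.mem_ofPred_eq] at hx
  nlinarith [sq_nonneg (c + ‖x‖ ^ 2 - 1)]

section Shell

variable {E : Type*} [NormedAddCommGroup E] [NormedSpace ℝ E] [FiniteDimensional ℝ E]
  [MeasurableSpace E] [BorelSpace E] (μ : Measure E) [μ.IsAddHaarMeasure]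

open Metric Module

theorem MeasureTheory.Measure.addHaar_closedBall_diff_ball [Nontrivial E] (x : E) {r R : ℝ}
    (hr : 0 ≤ r) (hrR : r ≤ R) :
    μ (closedBall x R \ ball x r) =
      ENNReal.ofReal (R ^ finrank ℝ E - r ^ finrank ℝ E) * μ (closedBall 0 1) := by
  rw [measure_sdiff (ball_subset_closedBall.trans (closedBall_subset_closedBall hrR))
      measurableSet_ball.nullMeasurableSet measure_ball_lt_top.ne,
    addHaar_closedBall' μ x (hr.trans hrR), addHaar_ball μ x hr,
    ← addHaar_unitClosedBall_eq_addHaar_unitBall,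
    ← ENNReal.sub_mul fun _ _ => measure_closedBall_lt_top.ne,
    ← ENNReal.ofReal_sub _ (by positivity)]

theorem addHaar_setOf_sq_add_sq_le [Nontrivial E] {k : ℕ} (hE : finrank ℝ E = 2 * k)
    {c y ε : ℝ} (hy : y ^ 2 ≤ ε ^ 2) (hc : c + √(ε ^ 2 - y ^ 2) ≤ 1) :
    μ {x : E | (c + ‖x‖ ^ 2 - 1) ^ 2 + y ^ 2 ≤ ε ^ 2} =
      ENNReal.ofReal ((1 - c + √(ε ^ 2 - y ^ 2)) ^ k - (1 - c - √(ε ^ 2 - y ^ 2)) ^ k) *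
        μ (closedBall 0 1) := by
  set s := √(ε ^ 2 - y ^ 2)
  have hs₀ : 0 ≤ s := Real.sqrt_nonneg _
  have hs_sq : s ^ 2 = ε ^ 2 - y ^ 2 := Real.sq_sqrt (by linarith)
  have hshell : {x : E | (c + ‖x‖ ^ 2 - 1) ^ 2 + y ^ 2 ≤ ε ^ 2} =
      {x : E | (‖x‖ ^ 2 - (1 - c)) ^ 2 ≤ s ^ 2} := by
    ext x
    simp only [Set.mem_ofPred_eq, hs_sq]
    constructor <;> intro h <;> linarith
  rw [hshell, setOf_sq_norm_sq_sub_le_sq hs₀ (by linarith),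
    μ.addHaar_closedBall_diff_ball 0 (Real.sqrt_nonneg _) (Real.sqrt_le_sqrt (by linarith)), hE,
    pow_mul, pow_mul, Real.sq_sqrt (by linarith), Real.sq_sqrt (by linarith)]

end Shell

theorem volume_euclidean_setOf_sq_add_sq_le {k : ℕ} (hk : 1 ≤ k) {c y ε : ℝ} (hy : y ^ 2 ≤ ε ^ 2)
    (hc : c + √(ε ^ 2 - y ^ 2) ≤ 1) :
    volume {x : EuclideanSpace ℝ (Fin (2 * k)) | (c + ‖x‖ ^ 2 - 1) ^ 2 + y ^ 2 ≤ ε ^ 2} =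
      ENNReal.ofReal (unitBallVol (2 * k) *
        ((1 - c + √(ε ^ 2 - y ^ 2)) ^ k - (1 - c - √(ε ^ 2 - y ^ 2)) ^ k)) := by
  have : Nontrivial (EuclideanSpace ℝ (Fin (2 * k))) :=
    Module.nontrivial_of_finrank_pos (by rw [finrank_euclideanSpace_fin]; omega)
  rw [unitBallVol, ENNReal.ofReal_mul ENNReal.toReal_nonneg,
    ENNReal.ofReal_toReal measure_closedBall_lt_top.ne, mul_comm (volume _),
    addHaar_setOf_sq_add_sq_le volume finrank_euclideanSpace_fin hy hc]

theorem sq_mul_add_add_sqrt_le_one {a b y ε : ℝ} (hε : ε < 1) (ha : a ∈ Set.Ico 0 ((1 - ε) / 2))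
    (hb : b ∈ Set.Ico 0 ((1 - ε) / 2)) (hy : |y| ≤ ε) :
    (a * y + b) ^ 2 + √(ε ^ 2 - y ^ 2) ≤ 1 := by
  have hε₀ : 0 ≤ ε := (abs_nonneg y).trans hy
  have habs : |a * y + b| ≤ 1 - ε :=
    calc |a * y + b| ≤ a * |y| + b := by
          simpa [abs_mul, abs_of_nonneg ha.1, abs_of_nonneg hb.1] using abs_add_le (a * y) b
      _ ≤ (1 - ε) / 2 * ε + (1 - ε) / 2 := by gcongr <;> linarith [ha.2.le, hb.2.le]
      _ ≤ 1 - ε := by nlinarith [abs_nonneg y]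
  have hsq : (a * y + b) ^ 2 ≤ 1 - ε :=
    calc (a * y + b) ^ 2 = |a * y + b| ^ 2 := (sq_abs _).symm
      _ ≤ (1 - ε) ^ 2 := pow_le_pow_left₀ (abs_nonneg _) habs 2
      _ ≤ 1 - ε := by nlinarith
  have hsqrt : √(ε ^ 2 - y ^ 2) ≤ ε := (Real.sqrt_le_left hε₀).2 (by nlinarith)
  linarith

/-- Case `m = 1` (so `N = 2k+2`).  With
`W = {(x,y) : (|x|² − 1)² + y² ≤ ε²} ⊆ ℝ^{2k+1} × ℝ`: for every `ε ∈ (0,1)` there is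
`δ > 0` such that for `a, b ∈ [0, δ)` the `(N−1)`-dimensional volume of the section
`{(x₂,…,xₙ,y) : (a·y+b, x₂,…,xₙ, y) ∈ W}` equals
`v₂ₖ · ∫_{−ε}^{ε} [(1−(a·y+b)²+√(ε²−y²))ᵏ − (1−(a·y+b)²−√(ε²−y²))ᵏ] dy`. -/
theorem section_volume_eq_integral_m_one (k : ℕ) (hk : 1 ≤ k)
    (ε : ℝ) (hε : ε ∈ Set.Ioo (0 : ℝ) 1) :
    ∃ δ > (0 : ℝ), ∀ a b : ℝ, a ∈ Set.Ico (0 : ℝ) δ → b ∈ Set.Ico (0 : ℝ) δ →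
      (volume {q : EuclideanSpace ℝ (Fin (2 * k)) × ℝ |
          ((a * q.2 + b) ^ 2 + ‖q.1‖ ^ 2 - 1) ^ 2 + q.2 ^ 2 ≤ ε ^ 2}).toReal =
        unitBallVol (2 * k) *
          ∫ y in (-ε)..ε,
            ((1 - (a * y + b) ^ 2 + Real.sqrt (ε ^ 2 - y ^ 2)) ^ k -
             (1 - (a * y + b) ^ 2 - Real.sqrt (ε ^ 2 - y ^ 2)) ^ k) := by
  obtain ⟨hε₀, hε₁⟩ := hε
  refine ⟨(1 - ε) / 2, by linarith, fun a b ha hb => ?_⟩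
  set g : ℝ → ℝ := fun y => unitBallVol (2 * k) *
    ((1 - (a * y + b) ^ 2 + √(ε ^ 2 - y ^ 2)) ^ k - (1 - (a * y + b) ^ 2 - √(ε ^ 2 - y ^ 2)) ^ k)
  have hshell : ∀ y ∈ Set.Icc (-ε) ε, y ^ 2 ≤ ε ^ 2 ∧ (a * y + b) ^ 2 + √(ε ^ 2 - y ^ 2) ≤ 1 :=
    fun y hy => ⟨sq_le_sq' hy.1 hy.2, sq_mul_add_add_sqrt_le_one hε₁ ha hb (abs_le.2 hy)⟩
  have hg₀ : ∀ y ∈ Set.Icc (-ε) ε, 0 ≤ g y := fun y hy =>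
    mul_nonneg ENNReal.toReal_nonneg <| sub_nonneg.2 <| pow_le_pow_left₀
      (by linarith [hshell y hy]) (by linarith [Real.sqrt_nonneg (ε ^ 2 - y ^ 2)]) k
  have hslice : ∀ y, volume {x : EuclideanSpace ℝ (Fin (2 * k)) |
      ((a * y + b) ^ 2 + ‖x‖ ^ 2 - 1) ^ 2 + y ^ 2 ≤ ε ^ 2} =
        ENNReal.ofReal ((Set.Icc (-ε) ε).indicator g y) := by
    intro y
    by_cases hy : y ∈ Set.Icc (-ε) ε
    · simp only [Set.indicator_of_mem hy, g]
      exact volume_euclidean_setOf_sq_add_sq_le hk (hshell y hy).1 (hshell y hy).2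
    · have hεy : ε ^ 2 < y ^ 2 := by
        rw [← sq_abs y]
        exact pow_lt_pow_left₀ (not_le.1 (hy ∘ abs_le.1)) hε₀.le two_ne_zero
      rw [Set.indicator_of_notMem hy, ENNReal.ofReal_zero]
      exact measure_setOf_sq_add_sq_le_of_lt _ _ hεy
  have hg : Continuous g := by fun_prop
  rw [Measure.volume_eq_prod, Measure.toReal_prod_apply_eq_integral
      (measurableSet_le (by fun_prop) (by fun_prop))
      (hg.integrableOn_Icc.integrable_indicator measurableSet_Icc)
      (Set.indicator_nonneg hg₀) hslice,
    integral_indicator measurableSet_Icc, integral_Icc_eq_integral_Ioc,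
    ← intervalIntegral.integral_of_le (by linarith), intervalIntegral.integral_const_mul]
end

section
/- For every integer k ≥ 1, every ε > 0 and all real a, b, the following integral identity holds: ∫_{−ε}^{ε} [ (1 − (a·y + b)² + √(ε² − y²))ᵏ − (1 − (a·y + b)² − √(ε² − y²))ᵏ ] dy = 2 · Σ_{j=1}^{⌈k/2⌉} C(k, 2j−1) · ε^{2j} · ∫_{−π/2}^{π/2} (1 − (a·ε·sin φ + b)²)^{k−2j+1} · cos^{2j} φ dφ, where C(k, i) denotes the binomial coefficient. -/
open MeasureTheory Real

lemma expand_lem (A B : ℝ) (k : ℕ) :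
    (A + B) ^ k - (A - B) ^ k
      = ∑ j ∈ Finset.Icc 1 ((k + 1) / 2),
          2 * (k.choose (2 * j - 1) : ℝ) * A ^ (k + 1 - 2 * j) * B ^ (2 * j - 1) := by
  rw [sub_eq_add_neg A B, add_pow, add_pow, ← Finset.sum_sub_distrib]
  have step1 : ∑ m ∈ Finset.range (k + 1),
      (A ^ m * B ^ (k - m) * (k.choose m : ℝ) - A ^ m * (-B) ^ (k - m) * (k.choose m : ℝ))
      = ∑ m ∈ (Finset.range (k + 1)).filter (fun m => (k - m) % 2 = 1),
          2 * (k.choose (k - (k - m)) : ℝ) * A ^ m * B ^ (k - m) := by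
    rw [Finset.sum_filter]
    apply Finset.sum_congr rfl
    intro m hm
    simp only [Finset.mem_range] at hm
    by_cases h : (k - m) % 2 = 1
    · rw [if_pos h]
      have hodd : Odd (k - m) := Nat.odd_iff.2 h
      rw [hodd.neg_pow]
      have : k - (k - m) = m := by omega
      rw [this]; ring
    · rw [if_neg h]
      have heven : Even (k - m) := Nat.even_iff.2 (by omega)
      rw [heven.neg_pow]; ring
  rw [step1]
  apply Finset.sum_nbij' (i := fun m => (k + 1 - m) / 2) (j := fun j => k + 1 - 2 * j)
  · intro m hm
    simp only [Finset.mem_filter, Finset.mem_range] at hm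
    simp only [Finset.mem_Icc]
    omega
  · intro j hj
    simp only [Finset.mem_Icc] at hj
    simp only [Finset.mem_filter, Finset.mem_range]
    omega
  · intro m hm
    simp only [Finset.mem_filter, Finset.mem_range] at hm
    omega
  · intro j hj
    simp only [Finset.mem_Icc] at hj
    omega
  · intro m hm
    simp only [Finset.mem_filter, Finset.mem_range] at hm
    have h1 : 2 * ((k + 1 - m) / 2) - 1 = k - m := by omega
    have h2 : k + 1 - 2 * ((k + 1 - m) / 2) = m := by omega
    have h3 : k - (k - m) = m := by omega
    rw [h1, h2, h3, Nat.choose_symm (by omega : m ≤ k)]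

lemma subst_lem (ε : ℝ) (hε : 0 < ε) (a b : ℝ) (p j : ℕ) (hj : 1 ≤ j) :
    (∫ y in (-ε)..ε, (1 - (a * y + b) ^ 2) ^ p * Real.sqrt (ε ^ 2 - y ^ 2) ^ (2 * j - 1))
      = ε ^ (2 * j) * ∫ φ in (-(π / 2))..(π / 2),
          (1 - (a * ε * Real.sin φ + b) ^ 2) ^ p * Real.cos φ ^ (2 * j) := by
  have hg : ∀ φ ∈ Set.uIcc (-(π/2)) (π/2),
      HasDerivAt (fun t => ε * Real.sin t) (ε * Real.cos φ) φ :=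
    fun φ _ => (Real.hasDerivAt_sin φ).const_mul ε
  have hcont : Continuous fun y : ℝ =>
      (1 - (a * y + b) ^ 2) ^ p * Real.sqrt (ε ^ 2 - y ^ 2) ^ (2 * j - 1) := by
    apply Continuous.mul (by continuity)
    exact (Real.continuous_sqrt.comp (by continuity)).pow _
  have h0 := intervalIntegral.integral_comp_smul_deriv hg
    ((continuous_const.mul Real.continuous_cos).continuousOn) hcont
  rw [show ε * Real.sin (-(π/2)) = -ε by simp, show ε * Real.sin (π/2) = ε by simp] at h0
  rw [← h0, ← intervalIntegral.integral_const_mul]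
  apply intervalIntegral.integral_congr
  intro φ hφ
  rw [Set.uIcc_of_le (by linarith [pi_pos] : -(π/2) ≤ π/2)] at hφ
  have hcos : 0 ≤ Real.cos φ := Real.cos_nonneg_of_mem_Icc ⟨hφ.1, hφ.2⟩
  have hsqrt : Real.sqrt (ε ^ 2 - (ε * Real.sin φ) ^ 2) = ε * Real.cos φ := by
    have h1 : ε ^ 2 - (ε * Real.sin φ) ^ 2 = (ε * Real.cos φ) ^ 2 := by
      have := Real.sin_sq_add_cos_sq φ; nlinarith
    rw [h1, Real.sqrt_sq (by positivity)]
  simp only [Function.comp, smul_eq_mul]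
  rw [hsqrt]
  obtain ⟨n, hn⟩ : ∃ n, 2 * j = n + 1 := ⟨2 * j - 1, by omega⟩
  rw [hn, Nat.add_sub_cancel]
  ring

/-- For every integer `k ≥ 1`, every `ε > 0` and all real `a, b`:
`∫_{−ε}^{ε} [(1−(a·y+b)²+√(ε²−y²))ᵏ − (1−(a·y+b)²−√(ε²−y²))ᵏ] dy`
`= 2·Σ_{j=1}^{⌈k/2⌉} C(k,2j−1)·ε^{2j}·∫_{−π/2}^{π/2} (1−(a·ε·sin φ+b)²)^{k−2j+1}·cos^{2j} φ dφ`
(the sum runs over all `j ≥ 1` with `2j−1 ≤ k`; the exponent `k−2j+1` is written as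
`k+1−2j`, which agrees with it in this range). -/
theorem integral_identity_m_one (k : ℕ) (hk : 1 ≤ k) (ε : ℝ) (hε : 0 < ε) (a b : ℝ) :
    (∫ y in (-ε)..ε,
        ((1 - (a * y + b) ^ 2 + Real.sqrt (ε ^ 2 - y ^ 2)) ^ k -
         (1 - (a * y + b) ^ 2 - Real.sqrt (ε ^ 2 - y ^ 2)) ^ k)) =
      2 * ∑ j ∈ Finset.Icc 1 ((k + 1) / 2),
        (k.choose (2 * j - 1) : ℝ) * ε ^ (2 * j) *
          ∫ φ in (-(π / 2))..(π / 2),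
            (1 - (a * ε * Real.sin φ + b) ^ 2) ^ (k + 1 - 2 * j) * Real.cos φ ^ (2 * j) := by
  simp only [expand_lem]
  rw [intervalIntegral.integral_finset_sum, Finset.mul_sum]
  · apply Finset.sum_congr rfl
    intro j hj
    have hj1 : 1 ≤ j := (Finset.mem_Icc.1 hj).1
    simp only [mul_assoc]
    rw [intervalIntegral.integral_const_mul, intervalIntegral.integral_const_mul]
    rw [← mul_assoc, subst_lem ε hε a b _ j hj1]
    simp only [← mul_assoc]
  · intro j _
    apply Continuous.intervalIntegrable
    apply Continuous.mul (by continuity)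
    exact (Real.continuous_sqrt.comp (by continuity)).pow _
end

section
/- Let N ≥ 2. For every a ∈ ℝ^{N−1} and b ∈ ℝ with b + |a|²/4 ≥ 0, the N-dimensional Lebesgue volume of the region cut from the interior of the paraboloid by the hyperplane x_N = ⟨a, x'⟩ + b, namely {(x', x_N) ∈ ℝ^{N−1} × ℝ : |x'|² ≤ x_N ≤ ⟨a, x'⟩ + b}, equals (2·v_{N−1}/(N+1)) · (b + |a|²/4)^{(N+1)/2}. -/
open MeasureTheory
open scoped RealInnerProductSpace

/-!
Completing the square, `⟪a, y⟫ + b - ‖y‖² = R² - ‖y - a/2‖²` with `R² = b + ‖a‖²/4`, so by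
Fubini over vertical fibres and translation invariance the cut has the volume of the solid
paraboloid `{‖y‖² ≤ t ≤ R²}`. Slicing that one horizontally instead, the slice at height `t` is
a ball of radius `√t`, of volume `t^{n/2} v_n`, and `∫₀^{R²} t^{n/2} dt = 2 R^{n+2}/(n+2)`.
-/

open Set Metric Module Measure

theorem measurableSet_setOf_le_le {α : Type*} [MeasurableSpace α] {f g : α → ℝ}
    (hf : Measurable f) (hg : Measurable g) :
    MeasurableSet {p : α × ℝ | f p.1 ≤ p.2 ∧ p.2 ≤ g p.1} :=
  (measurableSet_le (hf.comp measurable_fst) measurable_snd).inter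
    (measurableSet_le measurable_snd (hg.comp measurable_fst))

theorem prod_volume_setOf_le_le_eq_lintegral {α : Type*} [MeasurableSpace α] {μ : Measure α}
    [SFinite μ] {f g : α → ℝ} (hf : Measurable f) (hg : Measurable g) :
    μ.prod volume {p : α × ℝ | f p.1 ≤ p.2 ∧ p.2 ≤ g p.1} =
      ∫⁻ x, ENNReal.ofReal (g x - f x) ∂μ := by
  rw [Measure.prod_apply (measurableSet_setOf_le_le hf hg)]
  exact lintegral_congr fun x => Real.volume_Icc (a := f x) (b := g x)

section InnerProductSpace

variable {E : Type*} [NormedAddCommGroup E] [InnerProductSpace ℝ E]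

theorem inner_add_sub_norm_sq_eq (a y : E) (b : ℝ) :
    ⟪a, y⟫ + b - ‖y‖ ^ 2 = b + ‖a‖ ^ 2 / 4 - ‖y - (2 : ℝ)⁻¹ • a‖ ^ 2 := by
  rw [norm_sub_sq_real, real_inner_smul_right, norm_smul, real_inner_comm]
  norm_num
  ring

variable [FiniteDimensional ℝ E] [MeasurableSpace E] [BorelSpace E]
  (μ : Measure E) [μ.IsAddHaarMeasure]

theorem lintegral_ofReal_sub_norm_sq {s : ℝ} (hs : 0 ≤ s) :
    ∫⁻ y, ENNReal.ofReal (s - ‖y‖ ^ 2) ∂μ =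
      ENNReal.ofReal (2 / (finrank ℝ E + 2) * s ^ (((finrank ℝ E : ℝ) + 2) / 2)) *
        μ (closedBall 0 1) := by
  set n := finrank ℝ E
  have hfiber (t : ℝ) : μ ((fun y => (y, t)) ⁻¹' {p : E × ℝ | ‖p.1‖ ^ 2 ≤ p.2 ∧ p.2 ≤ s}) =
      (Icc 0 s).indicator (fun t => ENNReal.ofReal (t ^ ((n : ℝ) / 2)) * μ (closedBall 0 1)) t := by
    by_cases ht : t ∈ Icc 0 s
    · have : (fun y => (y, t)) ⁻¹' {p : E × ℝ | ‖p.1‖ ^ 2 ≤ p.2 ∧ p.2 ≤ s} = closedBall 0 √t := by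
        ext y
        simp [Real.le_sqrt (norm_nonneg y) ht.1, ht.2]
      rw [indicator_of_mem ht, this, addHaar_closedBall' μ _ (Real.sqrt_nonneg t),
        Real.sqrt_eq_rpow, ← Real.rpow_natCast, ← Real.rpow_mul ht.1, one_div_mul_eq_div]
    · have : (fun y => (y, t)) ⁻¹' {p : E × ℝ | ‖p.1‖ ^ 2 ≤ p.2 ∧ p.2 ≤ s} = ∅ :=
        eq_empty_of_forall_notMem fun y ⟨hy, hts⟩ => ht ⟨(sq_nonneg ‖y‖).trans hy, hts⟩
      rw [indicator_of_notMem ht, this, measure_empty]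
  have hn : (-1 : ℝ) < n / 2 := by linarith [show (0 : ℝ) ≤ n / 2 by positivity]
  have hf : Measurable fun y : E => ‖y‖ ^ 2 := by fun_prop
  rw [← prod_volume_setOf_le_le_eq_lintegral (μ := μ) (g := fun _ => s) hf measurable_const,
    prod_apply_symm (measurableSet_setOf_le_le (g := fun _ => s) hf measurable_const)]
  simp_rw [hfiber]
  rw [lintegral_indicator measurableSet_Icc, lintegral_mul_const _ (by fun_prop),
    ← ofReal_integral_eq_lintegral_ofReal, integral_Icc_eq_integral_Ioc,
    ← intervalIntegral.integral_of_le hs, integral_rpow (.inl hn)]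
  · rw [show (n : ℝ) / 2 + 1 = (n + 2) / 2 by ring, Real.zero_rpow (by positivity), sub_zero]
    congr 2
    field_simp
  · exact (Real.continuous_rpow_const (by positivity)).integrableOn_Icc
  · exact (ae_restrict_iff' measurableSet_Icc).2 (ae_of_all _ fun t ht => Real.rpow_nonneg ht.1 _)

theorem prod_volume_paraboloid_cut {a : E} {b : ℝ} (h : 0 ≤ b + ‖a‖ ^ 2 / 4) :
    μ.prod volume {p : E × ℝ | ‖p.1‖ ^ 2 ≤ p.2 ∧ p.2 ≤ ⟪a, p.1⟫ + b} =
      ENNReal.ofReal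
          (2 / (finrank ℝ E + 2) * (b + ‖a‖ ^ 2 / 4) ^ (((finrank ℝ E : ℝ) + 2) / 2)) *
        μ (closedBall 0 1) := by
  calc μ.prod volume {p : E × ℝ | ‖p.1‖ ^ 2 ≤ p.2 ∧ p.2 ≤ ⟪a, p.1⟫ + b}
      = ∫⁻ y, ENNReal.ofReal (⟪a, y⟫ + b - ‖y‖ ^ 2) ∂μ :=
        prod_volume_setOf_le_le_eq_lintegral (f := fun y => ‖y‖ ^ 2) (g := fun y => ⟪a, y⟫ + b)
          (by fun_prop) (by fun_prop)
    _ = ∫⁻ y, ENNReal.ofReal (b + ‖a‖ ^ 2 / 4 - ‖y - (2 : ℝ)⁻¹ • a‖ ^ 2) ∂μ := by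
        simp_rw [inner_add_sub_norm_sq_eq]
    _ = ∫⁻ y, ENNReal.ofReal (b + ‖a‖ ^ 2 / 4 - ‖y‖ ^ 2) ∂μ :=
        lintegral_sub_right_eq_self (fun y => ENNReal.ofReal (b + ‖a‖ ^ 2 / 4 - ‖y‖ ^ 2)) _
    _ = _ := lintegral_ofReal_sub_norm_sq μ h

end InnerProductSpace

/-- Let `N ≥ 2`.  For every `a ∈ ℝ^{N−1}` and `b ∈ ℝ` with
`b + |a|²/4 ≥ 0`, the volume of the region cut from the interior of the paraboloid
`x_N = |x'|²` by the hyperplane `x_N = ⟨a,x'⟩ + b`, namely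
`{(x', x_N) : |x'|² ≤ x_N ≤ ⟨a,x'⟩ + b}`, equals
`(2·v_{N−1}/(N+1))·(b + |a|²/4)^{(N+1)/2}`. -/
theorem volume_paraboloid_cut (N : ℕ) (hN : 2 ≤ N)
    (a : EuclideanSpace ℝ (Fin (N - 1))) (b : ℝ) (h : 0 ≤ b + ‖a‖ ^ 2 / 4) :
    (volume {p : EuclideanSpace ℝ (Fin (N - 1)) × ℝ |
        ‖p.1‖ ^ 2 ≤ p.2 ∧ p.2 ≤ ⟪a, p.1⟫ + b}).toReal =
      (2 * unitBallVol (N - 1) / (N + 1)) * (b + ‖a‖ ^ 2 / 4) ^ (((N : ℝ) + 1) / 2) := by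
  have hdim : (finrank ℝ (EuclideanSpace ℝ (Fin (N - 1))) : ℝ) + 2 = N + 1 := by
    rw [finrank_euclideanSpace_fin, Nat.cast_sub (by omega)]
    ring
  rw [Measure.volume_eq_prod, prod_volume_paraboloid_cut volume h, hdim, ENNReal.toReal_mul,
    ENNReal.toReal_ofReal (by positivity), unitBallVol]
  ring
end

section
/- Let N ≥ 2 be even. Then there exists a nonzero real polynomial q in N+1 variables such that for all a ∈ ℝ^{N−1} and b ∈ ℝ with b + |a|²/4 > 0, one has q(V(a,b), a₁, …, a_{N−1}, b) = 0, where V(a,b) is the Lebesgue volume of {(x', x_N) : |x'|² ≤ x_N ≤ ⟨a, x'⟩ + b}. That is, the volume function defined by the elliptic paraboloid in even-dimensional space is algebraic. -/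
open MeasureTheory
open scoped RealInnerProductSpace

lemma paraboloid_vol_aux (n : ℕ) (a : EuclideanSpace ℝ (Fin n)) (b : ℝ)
    (hb : 0 < b + ‖a‖ ^ 2 / 4) :
    (volume {p : EuclideanSpace ℝ (Fin n) × ℝ |
        ‖p.1‖ ^ 2 ≤ p.2 ∧ p.2 ≤ ⟪a, p.1⟫ + b}).toReal
      = (∫ z : EuclideanSpace ℝ (Fin n), max (1 - ‖z‖ ^ 2) 0)
        * Real.sqrt (b + ‖a‖ ^ 2 / 4) ^ (n + 2) := by
  set R := Real.sqrt (b + ‖a‖ ^ 2 / 4) with hRdef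
  have hR0 : 0 < R := Real.sqrt_pos.2 hb
  have hR2 : R ^ 2 = b + ‖a‖ ^ 2 / 4 := Real.sq_sqrt hb.le
  set g : EuclideanSpace ℝ (Fin n) → ℝ := fun y => max (R ^ 2 - ‖y‖ ^ 2) 0 with hg
  have hgc : Continuous g := (continuous_const.sub (continuous_norm.pow 2)).max continuous_const
  have hgs : HasCompactSupport g := by
    apply HasCompactSupport.intro (isCompact_closedBall (0 : EuclideanSpace ℝ (Fin n)) R)
    intro y hy
    simp only [Metric.mem_closedBall, dist_zero_right, not_le] at hy
    have hle : R ^ 2 - ‖y‖ ^ 2 ≤ 0 := by nlinarith [norm_nonneg y]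
    simpa [hg] using max_eq_right hle
  have hgi : Integrable g := hgc.integrable_of_hasCompactSupport hgs
  have key : ∀ x : EuclideanSpace ℝ (Fin n),
      ⟪a, x⟫ + b - ‖x‖ ^ 2 = R ^ 2 - ‖x - (2:ℝ)⁻¹ • a‖ ^ 2 := by
    intro x
    have h1 : ‖x - (2:ℝ)⁻¹ • a‖ ^ 2
        = ‖x‖ ^ 2 - 2 * ⟪x, (2:ℝ)⁻¹ • a⟫ + ‖(2:ℝ)⁻¹ • a‖ ^ 2 := norm_sub_sq_real x _
    have h2 : ⟪x, (2:ℝ)⁻¹ • a⟫ = (2:ℝ)⁻¹ * ⟪a, x⟫ := by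
      rw [real_inner_smul_right, real_inner_comm]
    have h3 : ‖(2:ℝ)⁻¹ • a‖ ^ 2 = (2:ℝ)⁻¹ ^ 2 * ‖a‖ ^ 2 := by
      rw [norm_smul]; simp [mul_pow]
    rw [h1, h2, h3, hR2]; ring
  have hmeas : MeasurableSet {p : EuclideanSpace ℝ (Fin n) × ℝ |
      ‖p.1‖ ^ 2 ≤ p.2 ∧ p.2 ≤ ⟪a, p.1⟫ + b} := by
    apply IsClosed.measurableSet
    have : {p : EuclideanSpace ℝ (Fin n) × ℝ | ‖p.1‖ ^ 2 ≤ p.2 ∧ p.2 ≤ ⟪a, p.1⟫ + b}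
        = {p : EuclideanSpace ℝ (Fin n) × ℝ | ‖p.1‖ ^ 2 ≤ p.2}
          ∩ {p : EuclideanSpace ℝ (Fin n) × ℝ | p.2 ≤ ⟪a, p.1⟫ + b} := rfl
    rw [this]
    exact (isClosed_le ((continuous_norm.comp continuous_fst).pow 2) continuous_snd).inter
      (isClosed_le continuous_snd ((continuous_const.inner continuous_fst).add continuous_const))
  have hofreal : ∀ t : ℝ, ENNReal.ofReal (max t 0) = ENNReal.ofReal t := by
    intro t
    rcases le_total t 0 with h | h
    · rw [max_eq_right h, ENNReal.ofReal_zero, eq_comm, ENNReal.ofReal_eq_zero]; exact h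
    · rw [max_eq_left h]
  have hvol : volume {p : EuclideanSpace ℝ (Fin n) × ℝ |
        ‖p.1‖ ^ 2 ≤ p.2 ∧ p.2 ≤ ⟪a, p.1⟫ + b}
      = ∫⁻ x, ENNReal.ofReal (g (x - (2:ℝ)⁻¹ • a)) := by
    rw [Measure.volume_eq_prod, Measure.prod_apply hmeas]
    congr 1
    ext x
    have hpre : Prod.mk x ⁻¹' {p : EuclideanSpace ℝ (Fin n) × ℝ |
        ‖p.1‖ ^ 2 ≤ p.2 ∧ p.2 ≤ ⟪a, p.1⟫ + b} = Set.Icc (‖x‖ ^ 2) (⟪a, x⟫ + b) := rfl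
    rw [hpre, Real.volume_Icc]
    have hgx : g (x - (2:ℝ)⁻¹ • a) = max (⟪a, x⟫ + b - ‖x‖ ^ 2) 0 := by
      rw [hg]; rw [key x]
    rw [hgx, hofreal]
  have hfi : Integrable (fun x => g (x - (2:ℝ)⁻¹ • a)) := hgi.comp_sub_right _
  have hnn : 0 ≤ᵐ[volume] fun x : EuclideanSpace ℝ (Fin n) => g (x - (2:ℝ)⁻¹ • a) :=
    Filter.Eventually.of_forall fun x => le_max_right _ _
  rw [hvol, ← ofReal_integral_eq_lintegral_ofReal hfi hnn,
    ENNReal.toReal_ofReal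
      (integral_nonneg (f := fun x : EuclideanSpace ℝ (Fin n) => g (x - (2:ℝ)⁻¹ • a))
        fun x => le_max_right _ _),
    integral_sub_right_eq_self g _]
  -- now ∫ g = c * R^(n+2)
  have hcomp : ∀ z : EuclideanSpace ℝ (Fin n), g (R • z) = R ^ 2 * max (1 - ‖z‖ ^ 2) 0 := by
    intro z
    rw [hg]
    simp only [norm_smul, Real.norm_eq_abs, mul_pow, sq_abs]
    rw [mul_max_of_nonneg _ _ (by positivity : (0:ℝ) ≤ R ^ 2)]
    ring_nf
  have hscale : ∫ y, g y = R ^ n • ∫ z, g (R • z) := by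
    have h := Measure.integral_comp_inv_smul_of_nonneg volume
      (fun z : EuclideanSpace ℝ (Fin n) => g (R • z)) hR0.le
    simp only [smul_smul, mul_inv_cancel₀ hR0.ne', one_smul,
      finrank_euclideanSpace_fin] at h
    exact h
  rw [hscale]
  simp only [hcomp]
  rw [integral_const_mul, smul_eq_mul]
  ring

open MvPolynomial

/-- Let `N ≥ 2` be even.  There is a nonzero real polynomial `q` in
`N+1` variables such that for all `a ∈ ℝ^{N−1}` and `b ∈ ℝ` with `b + |a|²/4 > 0`,
`q(V(a,b), a₁, …, a_{N−1}, b) = 0`, where `V(a,b)` is the volume of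
`{(x', x_N) : |x'|² ≤ x_N ≤ ⟨a,x'⟩ + b}`: the volume function of the elliptic paraboloid
in even-dimensional space is algebraic. -/
theorem paraboloid_volume_algebraic_even (N : ℕ) (hN : 2 ≤ N) (hNeven : Even N) :
    ∃ q : MvPolynomial (Unit ⊕ Fin (N - 1) ⊕ Unit) ℝ, q ≠ 0 ∧
      ∀ (a : EuclideanSpace ℝ (Fin (N - 1))) (b : ℝ), 0 < b + ‖a‖ ^ 2 / 4 →
        MvPolynomial.eval
          (Sum.elim
            (fun _ => (volume {p : EuclideanSpace ℝ (Fin (N - 1)) × ℝ |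
              ‖p.1‖ ^ 2 ≤ p.2 ∧ p.2 ≤ ⟪a, p.1⟫ + b}).toReal)
            (Sum.elim (fun i => a i) (fun _ => b))) q = 0 := by
  classical
  set c : ℝ := ∫ z : EuclideanSpace ℝ (Fin (N - 1)), max (1 - ‖z‖ ^ 2) 0 with hc
  refine ⟨(X (Sum.inl ())) ^ 2 - C (c ^ 2) *
      (X (Sum.inr (Sum.inr ())) + C (4:ℝ)⁻¹ *
        ∑ i : Fin (N - 1), (X (Sum.inr (Sum.inl i))) ^ 2) ^ (N + 1), ?_, ?_⟩
  · intro h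
    have h1 := congrArg
      (eval (fun s : Unit ⊕ Fin (N - 1) ⊕ Unit => if s = Sum.inl () then (1:ℝ) else 0)) h
    simp only [map_sub, map_pow, map_mul, map_add, eval_C, eval_X, map_sum, map_zero,
      if_pos rfl] at h1
    have h2 : ∀ i : Fin (N - 1),
        (if (Sum.inr (Sum.inl i) : Unit ⊕ Fin (N - 1) ⊕ Unit) = Sum.inl () then (1:ℝ) else 0)
          = 0 := fun i => rfl
    simp only [h2] at h1
    norm_num [zero_pow (Nat.succ_ne_zero N)] at h1
    rw [if_neg (by simp)] at h1
    norm_num at h1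
  · intro a b hb
    have hv := paraboloid_vol_aux (N - 1) a b hb
    have hN1 : (N - 1) + 2 = N + 1 := by omega
    rw [hN1] at hv
    have hnorm : ‖a‖ ^ 2 = ∑ i : Fin (N - 1), a i ^ 2 := by
      rw [EuclideanSpace.norm_eq, Real.sq_sqrt (by positivity)]
      simp [sq_abs]
    simp only [map_sub, map_pow, map_mul, map_add, eval_C, eval_X, map_sum, Sum.elim_inl,
      Sum.elim_inr]
    rw [hv, ← hnorm]
    have hR2 : Real.sqrt (b + ‖a‖ ^ 2 / 4) ^ 2 = b + ‖a‖ ^ 2 / 4 := Real.sq_sqrt hb.le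
    have : (c * Real.sqrt (b + ‖a‖ ^ 2 / 4) ^ (N + 1)) ^ 2
        = c ^ 2 * (Real.sqrt (b + ‖a‖ ^ 2 / 4) ^ 2) ^ (N + 1) := by ring
    rw [this, hR2]
    ring
end

section
/- Let N ≥ 3 be odd and let B be the closed unit ball in ℝᴺ. Then there exists a nonzero real polynomial p in N+2 variables such that for all a ∈ ℝᴺ with a ≠ 0 and all b ∈ ℝ: p(V(a,b), a₁, …, a_N, b) = 0, where V(a,b) is the Lebesgue volume of B ∩ {x : ⟨a, x⟩ ≤ b}. That is, the unit ball in odd-dimensional Euclidean space is algebraically integrable. -/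
/-!
Rotating `a` onto a coordinate axis and slicing the ball perpendicular to that axis, Fubini gives,
for `|b| ≤ ‖a‖` and `N = 2m + 1`,
`V(a, b) = vol(B_{2m}) ∫_{-1}^{b/‖a‖} (1 - s²)^m ds = C₀ + P(b/‖a‖)`
with `P` an odd polynomial of degree `N`: the exponent `m` is an integer because `N` is odd.
Hence `(V - C₀) ‖a‖^N` is a polynomial in `b` and `‖a‖² = ∑ aᵢ²`, and squaring removes the odd
power of `‖a‖`. When the hyperplane misses the ball, `V` is `0` or `vol B`, which the factors
`V` and `V - vol B` absorb.
-/

open MeasureTheory Set Metric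
open scoped RealInnerProductSpace

section HalfSpace

variable {E : Type*} [NormedAddCommGroup E] [InnerProductSpace ℝ E]

lemma closedBall_inter_inner_le_eq_empty {a : E} {b : ℝ} (hb : b < -‖a‖) :
    closedBall (0 : E) 1 ∩ {x | ⟪a, x⟫ ≤ b} = ∅ := by
  refine eq_empty_of_forall_notMem fun x ⟨hx, hax⟩ => ?_
  rw [mem_closedBall_zero_iff] at hx
  have hax' : -‖a‖ ≤ ⟪a, x⟫ := neg_le_of_abs_le ((abs_real_inner_le_norm a x).trans
    (mul_le_of_le_one_right (norm_nonneg a) hx))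
  exact lt_irrefl b (hb.trans_le (hax'.trans hax))

lemma closedBall_inter_inner_le_eq_closedBall {a : E} {b : ℝ} (hb : ‖a‖ ≤ b) :
    closedBall (0 : E) 1 ∩ {x | ⟪a, x⟫ ≤ b} = closedBall 0 1 :=
  inter_eq_left.mpr fun x hx => (real_inner_le_norm a x).trans <|
    (mul_le_of_le_one_right (norm_nonneg a) (mem_closedBall_zero_iff.mp hx)).trans hb

variable [FiniteDimensional ℝ E] [MeasurableSpace E] [BorelSpace E]

lemma volume_closedBall_inter_inner_le_congr {u v : E} (h : ‖u‖ = ‖v‖) (c : ℝ) :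
    volume (closedBall (0 : E) 1 ∩ {x | ⟪u, x⟫ ≤ c})
      = volume (closedBall (0 : E) 1 ∩ {x | ⟪v, x⟫ ≤ c}) := by
  set R := Submodule.reflection (ℝ ∙ (u - v))ᗮ
  have hRu : R u = v := Submodule.reflection_sub h
  have hpre : R ⁻¹' (closedBall 0 1 ∩ {x | ⟪v, x⟫ ≤ c}) = closedBall 0 1 ∩ {x | ⟪u, x⟫ ≤ c} := by
    ext x
    simp only [mem_preimage, mem_inter_iff, mem_closedBall_zero_iff, mem_ofPred_eq, R.norm_map,
      ← hRu, R.inner_map_map]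
  have hmeas : MeasurableSet (closedBall (0 : E) 1 ∩ {x | ⟪v, x⟫ ≤ c}) :=
    measurableSet_closedBall.inter (measurableSet_le (by fun_prop) measurable_const)
  rw [← hpre, R.measurePreserving.measure_preimage hmeas.nullMeasurableSet]

end HalfSpace

lemma EuclideanSpace.volume_closedBall_inter_inner_le {ι : Type*} [Fintype ι] [DecidableEq ι]
    {a : EuclideanSpace ℝ ι} (ha : a ≠ 0) (b : ℝ) (i : ι) :
    volume (closedBall (0 : EuclideanSpace ℝ ι) 1 ∩ {x | ⟪a, x⟫ ≤ b})
      = volume (closedBall (0 : EuclideanSpace ℝ ι) 1 ∩ {x | x i ≤ b / ‖a‖}) := by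
  have hna : 0 < ‖a‖ := norm_pos_iff.mpr ha
  have hscale : {x : EuclideanSpace ℝ ι | ⟪a, x⟫ ≤ b} = {x | ⟪‖a‖⁻¹ • a, x⟫ ≤ b / ‖a‖} := by
    ext x
    rw [mem_ofPred_eq, mem_ofPred_eq, real_inner_smul_left, inv_mul_eq_div,
      div_le_div_iff_of_pos_right hna]
  have hcoord : {x : EuclideanSpace ℝ ι | x i ≤ b / ‖a‖}
      = {x | ⟪EuclideanSpace.single i 1, x⟫ ≤ b / ‖a‖} := by
    simp [EuclideanSpace.inner_single_left]
  rw [hscale, hcoord]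
  refine volume_closedBall_inter_inner_le_congr ?_ _
  rw [norm_smul, norm_inv, norm_norm, inv_mul_cancel₀ hna.ne', PiLp.norm_single, norm_one]

lemma volume_sq_add_sum_sq_le_one {n : ℕ} {s : ℝ} (hs : s ^ 2 ≤ 1) :
    volume {y : Fin n → ℝ | s ^ 2 + ∑ i, y i ^ 2 ≤ 1}
      = ENNReal.ofReal (√(1 - s ^ 2) ^ n)
        * volume (closedBall (0 : EuclideanSpace ℝ (Fin n)) 1) := by
  have hball : {y : Fin n → ℝ | s ^ 2 + ∑ i, y i ^ 2 ≤ 1}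
      = WithLp.toLp 2 ⁻¹' closedBall (0 : EuclideanSpace ℝ (Fin n)) √(1 - s ^ 2) := by
    ext y
    rw [mem_preimage, mem_closedBall_zero_iff, Real.le_sqrt (norm_nonneg _) (by linarith),
      EuclideanSpace.real_norm_sq_eq, mem_ofPred_eq]
    constructor <;> intro h <;> linarith
  rw [hball, (PiLp.volume_preserving_toLp (Fin n)).measure_preimage
    measurableSet_closedBall.nullMeasurableSet,
    Measure.addHaar_closedBall' _ _ (Real.sqrt_nonneg _),
    finrank_euclideanSpace_fin]

lemma volume_closedBall_inter_coord_le (n : ℕ) {t : ℝ} (ht₁ : -1 ≤ t) (ht₂ : t ≤ 1) :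
    volume (closedBall (0 : EuclideanSpace ℝ (Fin (n + 1))) 1 ∩ {x | x 0 ≤ t})
      = volume (closedBall (0 : EuclideanSpace ℝ (Fin n)) 1)
        * ENNReal.ofReal (∫ s in -1..t, √(1 - s ^ 2) ^ n) := by
  set A : Set (ℝ × (Fin n → ℝ)) := {p | p.1 ^ 2 + ∑ i, p.2 i ^ 2 ≤ 1 ∧ p.1 ≤ t}
  have hA : MeasurableSet A := by
    simp only [A, ofPred_and]
    exact (measurableSet_le (by fun_prop) measurable_const).inter
      (measurableSet_le measurable_fst measurable_const)
  have hsplit : closedBall (0 : EuclideanSpace ℝ (Fin (n + 1))) 1 ∩ {x | x 0 ≤ t}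
      = (MeasurableEquiv.piFinSuccAbove (fun _ => ℝ) 0 ∘ WithLp.ofLp) ⁻¹' A := by
    ext x
    rw [mem_inter_iff, mem_closedBall_zero_iff, ← sq_le_one_iff₀ (norm_nonneg _),
      EuclideanSpace.real_norm_sq_eq, Fin.sum_univ_succAbove _ 0]
    exact Iff.rfl
  have hslice (s : ℝ) : volume (Prod.mk s ⁻¹' A) = (Icc (-1) t).indicator
      (fun s => ENNReal.ofReal (√(1 - s ^ 2) ^ n)
        * volume (closedBall (0 : EuclideanSpace ℝ (Fin n)) 1)) s := by
    by_cases hs : s ∈ Icc (-1) t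
    · rw [indicator_of_mem hs, ← volume_sq_add_sum_sq_le_one (by nlinarith [hs.1, hs.2])]
      congr 1
      ext y
      simp [A, hs.2]
    · rw [indicator_of_notMem hs, measure_eq_zero_iff_ae_notMem]
      refine Filter.Eventually.of_forall fun y ⟨hy, hst⟩ => hs ⟨?_, hst⟩
      nlinarith [Finset.sum_nonneg fun i (_ : i ∈ Finset.univ) => sq_nonneg (y i)]
  have hint : IntegrableOn (fun s : ℝ => √(1 - s ^ 2) ^ n) (Icc (-1) t) :=
    (by fun_prop : Continuous fun s : ℝ => √(1 - s ^ 2) ^ n).integrableOn_Icc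
  rw [hsplit, ((volume_preserving_piFinSuccAbove (fun _ => ℝ) 0).comp
      (PiLp.volume_preserving_ofLp (Fin (n + 1)))).measure_preimage hA.nullMeasurableSet,
    Measure.volume_eq_prod, Measure.prod_apply hA, lintegral_congr hslice,
    lintegral_indicator measurableSet_Icc, lintegral_mul_const _ (by fun_prop), mul_comm,
    intervalIntegral.integral_of_le ht₁, ← integral_Icc_eq_integral_Ioc,
    ofReal_integral_eq_lintegral_ofReal hint
      (Filter.Eventually.of_forall fun s => by positivity)]

lemma integral_one_sub_sq_pow (m : ℕ) (t : ℝ) :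
    ∫ s in -1..t, (1 - s ^ 2) ^ m
      = ∑ k ∈ Finset.range (m + 1),
          (-1) ^ k * m.choose k * ((t ^ (2 * k + 1) + 1) / (2 * k + 1)) := by
  have hexpand (s : ℝ) : (1 - s ^ 2) ^ m
      = ∑ k ∈ Finset.range (m + 1), (-1) ^ k * m.choose k * s ^ (2 * k) := by
    rw [sub_eq_neg_add, add_pow]
    refine Finset.sum_congr rfl fun k _ => ?_
    rw [one_pow, neg_pow, pow_mul]
    ring
  simp_rw [hexpand]
  rw [intervalIntegral.integral_finsetSum fun k _ => (by fun_prop : Continuous fun s : ℝ =>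
    (-1) ^ k * m.choose k * s ^ (2 * k)).intervalIntegrable _ _]
  refine Finset.sum_congr rfl fun k _ => ?_
  rw [intervalIntegral.integral_const_mul, integral_pow, (odd_two_mul_add_one k).neg_one_pow]
  push_cast
  ring

noncomputable def capCoeff (m k : ℕ) : ℝ :=
  (volume (closedBall (0 : EuclideanSpace ℝ (Fin (2 * m))) 1)).toReal
    * ((-1) ^ k * m.choose k) / (2 * k + 1)

noncomputable def capOddPart {R : Type*} [CommRing R] [Algebra ℝ R] (m : ℕ) (b s : R) : R :=
  ∑ k ∈ Finset.range (m + 1), algebraMap ℝ R (capCoeff m k) * b ^ (2 * k + 1) * s ^ (m - k)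

lemma capOddPart_div_mul_pow (m : ℕ) (b : ℝ) {r : ℝ} (hr : r ≠ 0) :
    capOddPart m (b / r) 1 * r ^ (2 * m + 1) = capOddPart m b (r ^ 2) := by
  simp only [capOddPart, one_pow, mul_one, Finset.sum_mul]
  refine Finset.sum_congr rfl fun k hk => ?_
  have hkm : k ≤ m := Nat.lt_succ_iff.mp (Finset.mem_range.mp hk)
  have hsplit : r ^ (2 * m + 1) = r ^ (2 * k + 1) * (r ^ 2) ^ (m - k) := by
    rw [← pow_mul, ← pow_add]
    congr 1
    omega
  rw [div_pow, hsplit]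
  field_simp

lemma toReal_volume_closedBall_inter_coord_le (m : ℕ) {t : ℝ} (ht : |t| ≤ 1) :
    (volume (closedBall (0 : EuclideanSpace ℝ (Fin (2 * m + 1))) 1 ∩ {x | x 0 ≤ t})).toReal
      = ∑ k ∈ Finset.range (m + 1), capCoeff m k + capOddPart m t 1 := by
  obtain ⟨ht₁, ht₂⟩ := abs_le.mp ht
  have hsqrt : ∫ s in -1..t, √(1 - s ^ 2) ^ (2 * m) = ∫ s in -1..t, (1 - s ^ 2) ^ m := by
    refine intervalIntegral.integral_congr fun s hs => ?_
    rw [uIcc_of_le ht₁] at hs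
    rw [pow_mul, Real.sq_sqrt (by nlinarith [hs.1, hs.2])]
  have hnonneg : 0 ≤ ∫ s in -1..t, √(1 - s ^ 2) ^ (2 * m) :=
    intervalIntegral.integral_nonneg ht₁ fun s _ => by positivity
  rw [volume_closedBall_inter_coord_le _ ht₁ ht₂, ENNReal.toReal_mul,
    ENNReal.toReal_ofReal hnonneg, hsqrt, integral_one_sub_sq_pow, Finset.mul_sum, capOddPart,
    ← Finset.sum_add_distrib]
  refine Finset.sum_congr rfl fun k _ => ?_
  simp only [capCoeff, Algebra.algebraMap_self, RingHom.id_apply, one_pow, mul_one]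
  ring

lemma sub_mul_norm_pow_eq_capOddPart {m : ℕ} {a : EuclideanSpace ℝ (Fin (2 * m + 1))}
    (ha : a ≠ 0) {b : ℝ} (hb : |b| ≤ ‖a‖) :
    ((volume (closedBall (0 : EuclideanSpace ℝ (Fin (2 * m + 1))) 1 ∩ {x | ⟪a, x⟫ ≤ b})).toReal
      - ∑ k ∈ Finset.range (m + 1), capCoeff m k) * ‖a‖ ^ (2 * m + 1)
      = capOddPart m b (‖a‖ ^ 2) := by
  have hna : 0 < ‖a‖ := norm_pos_iff.mpr ha
  have ht : |b / ‖a‖| ≤ 1 := by rwa [abs_div, abs_norm, div_le_one hna]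
  rw [EuclideanSpace.volume_closedBall_inter_inner_le ha b 0,
    toReal_volume_closedBall_inter_coord_le m ht, add_sub_cancel_left,
    capOddPart_div_mul_pow m b hna.ne']

noncomputable def capRelation {R : Type*} [CommRing R] [Algebra ℝ R] (m : ℕ) (v b s : R) : R :=
  v * (v - algebraMap ℝ R (volume (closedBall (0 : EuclideanSpace ℝ (Fin (2 * m + 1))) 1)).toReal)
    * ((v - algebraMap ℝ R (∑ k ∈ Finset.range (m + 1), capCoeff m k)) ^ 2 * s ^ (2 * m + 1)
      - capOddPart m b s ^ 2)

lemma AlgHom.map_capRelation {R S : Type*} [CommRing R] [Algebra ℝ R] [CommRing S] [Algebra ℝ S]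
    (f : R →ₐ[ℝ] S) (m : ℕ) (v b s : R) :
    f (capRelation m v b s) = capRelation m (f v) (f b) (f s) := by
  simp only [capRelation, capOddPart, map_mul, map_sub, map_pow, map_sum, AlgHom.commutes]

lemma capRelation_volume_eq_zero {m : ℕ} {a : EuclideanSpace ℝ (Fin (2 * m + 1))} (ha : a ≠ 0)
    (b : ℝ) :
    capRelation m
      (volume (closedBall (0 : EuclideanSpace ℝ (Fin (2 * m + 1))) 1 ∩ {x | ⟪a, x⟫ ≤ b})).toReal
      b (‖a‖ ^ 2) = 0 := by
  simp only [capRelation, Algebra.algebraMap_self, RingHom.id_apply]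
  rcases lt_or_ge b (-‖a‖) with hb | hb
  · rw [closedBall_inter_inner_le_eq_empty hb, measure_empty, ENNReal.toReal_zero, zero_mul,
      zero_mul]
  rcases le_or_gt ‖a‖ b with hb' | hb'
  · rw [closedBall_inter_inner_le_eq_closedBall hb', sub_self, mul_zero, zero_mul]
  rw [← sub_mul_norm_pow_eq_capOddPart ha (abs_le.mpr ⟨hb, hb'.le⟩)]
  ring

open MvPolynomial in
noncomputable def capRelationPoly (m : ℕ) : MvPolynomial (Unit ⊕ Fin (2 * m + 1) ⊕ Unit) ℝ :=
  capRelation m (X (Sum.inl ())) (X (Sum.inr (Sum.inr ()))) (∑ i, X (Sum.inr (Sum.inl i)) ^ 2)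

lemma eval_capRelationPoly (m : ℕ) (v : ℝ) (a : EuclideanSpace ℝ (Fin (2 * m + 1))) (b : ℝ) :
    MvPolynomial.eval (Sum.elim (fun _ => v) (Sum.elim (fun i => a i) (fun _ => b)))
      (capRelationPoly m) = capRelation m v b (‖a‖ ^ 2) := by
  rw [← MvPolynomial.aeval_eq_eval, capRelationPoly, AlgHom.map_capRelation]
  simp [EuclideanSpace.real_norm_sq_eq]

lemma capRelationPoly_ne_zero (m : ℕ) : capRelationPoly m ≠ 0 := by
  obtain ⟨v, hv⟩ := Infinite.exists_notMem_finset
    ({0, (volume (closedBall (0 : EuclideanSpace ℝ (Fin (2 * m + 1))) 1)).toReal,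
      ∑ k ∈ Finset.range (m + 1), capCoeff m k} : Finset ℝ)
  intro h
  have hval := eval_capRelationPoly m v (EuclideanSpace.single 0 1) 0
  rw [h, map_zero, PiLp.norm_single, norm_one, one_pow, eq_comm] at hval
  simp only [Finset.mem_insert, Finset.mem_singleton, not_or] at hv
  simp [capRelation, capOddPart, sub_eq_zero, hv] at hval

theorem unit_ball_algebraically_integrable_general (N : ℕ) (hNodd : Odd N) :
    ∃ p : MvPolynomial (Unit ⊕ Fin N ⊕ Unit) ℝ, p ≠ 0 ∧
      ∀ (a : EuclideanSpace ℝ (Fin N)) (b : ℝ), a ≠ 0 →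
        MvPolynomial.eval
          (Sum.elim
            (fun _ => (volume (Metric.closedBall (0 : EuclideanSpace ℝ (Fin N)) 1 ∩
              {x : EuclideanSpace ℝ (Fin N) | ⟪a, x⟫ ≤ b})).toReal)
            (Sum.elim (fun i => a i) (fun _ => b))) p = 0 := by
  obtain ⟨m, rfl⟩ := hNodd
  exact ⟨capRelationPoly m, capRelationPoly_ne_zero m, fun a b ha => by
    rw [eval_capRelationPoly, capRelation_volume_eq_zero ha]⟩

/-- Let `N ≥ 3` be odd and `B` the closed unit ball in `ℝᴺ`.  There is
a nonzero real polynomial `p` in `N+2` variables such that for all `a ∈ ℝᴺ \ {0}` and all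
`b ∈ ℝ`: `p(V(a,b), a₁, …, a_N, b) = 0`, where `V(a,b)` is the volume of
`B ∩ {x : ⟨a,x⟩ ≤ b}`; i.e. the unit ball in odd-dimensional space is algebraically
integrable. -/
theorem unit_ball_algebraically_integrable (N : ℕ) (hN : 3 ≤ N) (hNodd : Odd N) :
    ∃ p : MvPolynomial (Unit ⊕ Fin N ⊕ Unit) ℝ, p ≠ 0 ∧
      ∀ (a : EuclideanSpace ℝ (Fin N)) (b : ℝ), a ≠ 0 →
        MvPolynomial.eval
          (Sum.elim
            (fun _ => (volume (Metric.closedBall (0 : EuclideanSpace ℝ (Fin N)) 1 ∩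
              {x : EuclideanSpace ℝ (Fin N) | ⟪a, x⟫ ≤ b})).toReal)
            (Sum.elim (fun i => a i) (fun _ => b))) p = 0 :=
  unit_ball_algebraically_integrable_general N hNodd
end
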